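/- arXiv:1211.4647 — 5 statements merged into one kernel-verified Lean document; each statement's English description precedes it below -/
import Mathlib

section
/- Let F be a forest, C a subtree clutter of F, E a maximum-cardinality independent set of edges of C, and e ∈ E. Then there exists a vertex v in e such that E \ {e} is a maximum-cardinality independent set of edges of the deletion clutter C \ {v}. -/
/-- A subtree clutter of a forest `F`. -/
def IsSubtreeClutter {V : Type*} (F : SimpleGraph V) (C : Set (Set V)) : Prop :=
  (∀ s ∈ C, (F.induce s).Connected) ∧ ∀ s ∈ C, ∀ t ∈ C, s ⊆ t → s = t

/-- An independent set of edges of a clutter: pairwise vertex-disjoint members. -/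
def IsIndepEdgeSet {V : Type*} (C E : Set (Set V)) : Prop :=
  E ⊆ C ∧ E.Pairwise Disjoint

open SimpleGraph Walk

set_option linter.unusedSectionVars false
namespace SubtreeAux

variable {V : Type*} [DecidableEq V] {F : SimpleGraph V}

/-- on-every-walk predicate -/
def OEW (F : SimpleGraph V) (a b m : V) : Prop := ∀ w : F.Walk a b, m ∈ w.support

lemma oew_symm {a b m : V} (h : OEW F a b m) : OEW F b a m := by
  intro w
  have := h w.reverse
  rwa [support_reverse, List.mem_reverse] at this

/-- A walk within a connected induced set. -/
lemma walk_of_conn {s : Set V} (hs : (F.induce s).Connected) {a b : V}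
    (ha : a ∈ s) (hb : b ∈ s) : ∃ w : F.Walk a b, ∀ x ∈ w.support, x ∈ s := by
  obtain ⟨w⟩ := hs.preconnected ⟨a, ha⟩ ⟨b, hb⟩
  refine ⟨(w.map (Embedding.induce s).toHom), ?_⟩
  intro x hx
  have hx : x ∈ List.map (Embedding.induce (G := F) s).toHom w.support := by
    rw [← Walk.support_map]; exact hx
  obtain ⟨y, _, rfl⟩ := List.mem_map.1 hx
  exact y.2

/-- Reachability in induced subgraph from a walk with support inside the set. -/
lemma reach_induce_of_walk {u : Set V} {a b : V} (w : F.Walk a b)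
    (h : ∀ x ∈ w.support, x ∈ u) (ha : a ∈ u) (hb : b ∈ u) :
    (F.induce u).Reachable ⟨a, ha⟩ ⟨b, hb⟩ := by
  induction w with
  | nil => exact Reachable.refl _
  | @cons x y z hadj p ih =>
    have hy : y ∈ u := h y (by simp)
    have : (F.induce u).Adj ⟨x, ha⟩ ⟨y, hy⟩ := by
      simp [hadj]
    exact (this.reachable).trans (ih (fun v hv => h v (by simp [hv])) hy hb)

/-- canonical geodesic: a path whose support is inside every walk's support -/
lemma exists_geodesic (hF : F.IsAcyclic) {a b : V} (h : F.Reachable a b) :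
    ∃ p : F.Walk a b, p.IsPath ∧ ∀ (w : F.Walk a b) (x : V), x ∈ p.support → x ∈ w.support := by
  obtain ⟨w0⟩ := h
  refine ⟨w0.bypass, w0.bypass_isPath, ?_⟩
  intro w x hx
  have heq : (⟨w0.bypass, w0.bypass_isPath⟩ : F.Path a b) = ⟨w.bypass, w.bypass_isPath⟩ :=
    hF.path_unique _ _
  have hsup := congrArg (fun p : F.Path a b => (p : F.Walk a b).support) heq
  simp only at hsup
  exact w.support_bypass_subset (hsup ▸ hx)

/-- first hit of a set along a walk -/
lemma first_hit {a b : V} (w : F.Walk a b) (S : Set V) :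
    b ∈ S → ∃ m, m ∈ S ∧ ∃ (w1 : F.Walk a m) (w2 : F.Walk m b),
      w = w1.append w2 ∧ ∀ x ∈ w1.support, x ∈ S → x = m := by
  induction w with
  | @nil u =>
    intro hb
    exact ⟨u, hb, Walk.nil, Walk.nil, rfl, fun x hx _ => by simpa using hx⟩
  | @cons x y z hadj p ih =>
    intro hb
    by_cases hx : x ∈ S
    · exact ⟨x, hx, Walk.nil, Walk.cons hadj p, rfl, fun v hv _ => by simpa using hv⟩
    · obtain ⟨m, hm, w1, w2, hsplit, hprop⟩ := ih hb
      refine ⟨m, hm, Walk.cons hadj w1, w2, by rw [Walk.cons_append, hsplit], ?_⟩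
      intro v hv hvS
      rcases List.mem_cons.1 (by simpa using hv) with rfl | hv'
      · exact absurd hvS hx
      · exact hprop v hv' hvS

lemma isPath_append_of {a m b : V} (p : F.Walk a m) (q : F.Walk m b)
    (hp : p.IsPath) (hq : q.IsPath) (h : ∀ x ∈ p.support, x ∈ q.support → x = m) :
    (p.append q).IsPath := by
  rw [isPath_def, support_append]
  have hq' : q.support.Nodup := (isPath_def q).1 hq
  rw [q.support_eq_cons] at hq'
  obtain ⟨hmnot, htail⟩ := List.nodup_cons.1 hq'
  refine List.Nodup.append ((isPath_def p).1 hp) htail ?_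
  intro x hx hx'
  have hxm : x = m := h x hx (List.mem_of_mem_tail hx')
  subst hxm
  exact hmnot hx'

/-- median of three mutually reachable vertices in a forest -/
lemma median (hF : F.IsAcyclic) {a b c : V} (hab : F.Reachable a b) (hca : F.Reachable c a) :
    ∃ m, OEW F a b m ∧ OEW F a c m ∧ OEW F b c m := by
  obtain ⟨P, hP, hPall⟩ := exists_geodesic hF hab
  obtain ⟨r, hr, hrall⟩ := exists_geodesic hF hca
  obtain ⟨m, hmP, r1, r2, hsplit, hprop⟩ := first_hit r {x | x ∈ P.support} P.start_mem_support
  have hr1path : r1.IsPath := by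
    rw [hsplit] at hr; exact hr.of_append_left
  have hmr1 : m ∈ r1.support := r1.end_mem_support
  -- m on every a-b walk
  have h1 : OEW F a b m := fun w => hPall w m hmP
  -- m on every a-c walk
  have h2 : OEW F a c m := by
    apply oew_symm
    intro w
    have : m ∈ r.support := by
      rw [hsplit, mem_support_append_iff]; exact Or.inl hmr1
    exact hrall w m this
  -- m on every b-c walk
  have h3 : OEW F b c m := by
    apply oew_symm
    -- build path c -> b through m
    have hdrop : (P.dropUntil m hmP).IsPath := hP.dropUntil hmP
    have hjoin : ∀ x ∈ r1.support, x ∈ (P.dropUntil m hmP).support → x = m := by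
      intro x hx hx'
      exact hprop x hx (P.support_dropUntil_subset hmP hx')
    have hcb : (r1.append (P.dropUntil m hmP)).IsPath := isPath_append_of _ _ hr1path hdrop hjoin
    intro w
    have huniq : (⟨r1.append (P.dropUntil m hmP), hcb⟩ : F.Path c b) = ⟨w.bypass, w.bypass_isPath⟩ :=
      hF.path_unique _ _
    have hsup := congrArg (fun p : F.Path c b => (p : F.Walk c b).support) huniq
    simp only at hsup
    have hmmem : m ∈ (r1.append (P.dropUntil m hmP)).support := by
      rw [mem_support_append_iff]; exact Or.inl hmr1
    exact w.support_bypass_subset (hsup ▸ hmmem)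
  exact ⟨m, h1, h2, h3⟩


/-- gate of a connected set towards another disjoint connected set -/
lemma gate (hF : F.IsAcyclic) {x y : Set V}
    (hx : (F.induce x).Connected) (hy : (F.induce y).Connected)
    (hxy : Disjoint x y) {a0 b0 : V} (ha0 : a0 ∈ x) (hb0 : b0 ∈ y)
    (hr : F.Reachable b0 a0) :
    ∃ p ∈ x, ∀ a ∈ x, ∀ b ∈ y, ∀ w : F.Walk a b, p ∈ w.support := by
  obtain ⟨w0⟩ := hr
  obtain ⟨p, hpx, w1, w2, hsplit, hprop⟩ := first_hit w0 x ha0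
  refine ⟨p, hpx, ?_⟩
  intro a ha b hb w
  -- reachabilities
  obtain ⟨wa, hwa⟩ := walk_of_conn hx ha hpx   -- a → p inside x
  obtain ⟨wb0, hwb0⟩ := walk_of_conn hy hb hb0 -- b → b0 inside y
  obtain ⟨m, hm1, hm2, hm3⟩ := median hF ⟨w⟩ ⟨wa.reverse⟩
  -- m ∈ x
  have hmx : m ∈ x := hwa m (hm2 wa)
  -- m = p
  have hmp : m = p := by
    have := hm3 (wb0.append w1)
    rw [mem_support_append_iff] at this
    rcases this with h' | h'
    · exact absurd (hwb0 m h') (fun hmy => (Set.disjoint_left.1 hxy hmx) hmy)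
    · exact hprop m h' hmx
  subst hmp
  exact hm1 w


/-- walk along a chain of intersecting connected sets -/
lemma chain_walk : ∀ (l : List (Set V)) (hl : l ≠ []),
    l.Chain' (fun a b => (a ∩ b).Nonempty) →
    (∀ c ∈ l, (F.induce c).Connected) →
    ∀ a b : V, a ∈ l.head hl → b ∈ l.getLast hl →
    ∃ w : F.Walk a b, ∀ v ∈ w.support, ∃ c ∈ l, v ∈ c := by
  intro l
  induction l with
  | nil => intro h; exact absurd rfl h
  | cons c1 l' ih =>
    intro _ hchain hconn a b ha hb
    match l' with
    | [] =>
      simp only [List.head_cons] at ha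
      simp only [List.getLast_singleton] at hb
      obtain ⟨w, hw⟩ := walk_of_conn (hconn c1 (by simp)) ha hb
      exact ⟨w, fun v hv => ⟨c1, by simp, hw v hv⟩⟩
    | c2 :: l'' =>
      have hc12 : (c1 ∩ c2).Nonempty := (List.isChain_cons.1 hchain).1 c2 rfl
      obtain ⟨z, hz1, hz2⟩ := hc12
      obtain ⟨w1, hw1⟩ := walk_of_conn (hconn c1 (by simp)) (by simpa using ha) hz1
      have hb' : b ∈ (c2 :: l'').getLast (by simp) := by
        have : (c1 :: c2 :: l'').getLast (by simp) = (c2 :: l'').getLast (by simp) :=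
          List.getLast_cons (by simp)
        rwa [this] at hb
      obtain ⟨w2, hw2⟩ := ih (by simp) (List.isChain_cons.1 hchain).2
        (fun c hc => hconn c (by simp [hc])) z b (by simpa using hz2) hb'
      refine ⟨w1.append w2, ?_⟩
      intro v hv
      rw [mem_support_append_iff] at hv
      rcases hv with hv | hv
      · exact ⟨c1, by simp, hw1 v hv⟩
      · obtain ⟨c, hc, hvc⟩ := hw2 v hv
        exact ⟨c, by simp [hc], hvc⟩

/-- Helly property for three subtrees -/
lemma helly3 (hF : F.IsAcyclic) {s t u : Set V}
    (hs : (F.induce s).Connected) (ht : (F.induce t).Connected) (hu : (F.induce u).Connected)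
    (hst : (s ∩ t).Nonempty) (hsu : (s ∩ u).Nonempty) (htu : (t ∩ u).Nonempty) :
    (s ∩ t ∩ u).Nonempty := by
  obtain ⟨x, hxs, hxt⟩ := hst
  obtain ⟨y, hys, hyu⟩ := hsu
  obtain ⟨z, hzt, hzu⟩ := htu
  obtain ⟨ws, hws⟩ := walk_of_conn hs hxs hys   -- x → y in s
  obtain ⟨wt, hwt⟩ := walk_of_conn ht hxt hzt   -- x → z in t
  obtain ⟨wu, hwu⟩ := walk_of_conn hu hzu hyu   -- z → y in u
  obtain ⟨m, hm1, hm2, hm3⟩ := median hF ⟨ws⟩ ⟨wt.reverse⟩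
  exact ⟨m, ⟨hws m (hm1 ws), hwt m (hm2 wt)⟩, hwu m (oew_symm hm3 wu)⟩

/-- intersection of two intersecting subtrees is a subtree -/
lemma inter_conn (hF : F.IsAcyclic) {s t : Set V}
    (hs : (F.induce s).Connected) (ht : (F.induce t).Connected)
    (hst : (s ∩ t).Nonempty) : (F.induce (s ∩ t)).Connected := by
  obtain ⟨x0, hx0⟩ := hst
  rw [connected_iff]
  refine ⟨?_, ⟨⟨x0, hx0⟩⟩⟩
  rintro ⟨a, ha⟩ ⟨b, hb⟩
  obtain ⟨ws, hws⟩ := walk_of_conn hs ha.1 hb.1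
  obtain ⟨wt, hwt⟩ := walk_of_conn ht ha.2 hb.2
  obtain ⟨p, hp, hpall⟩ := exists_geodesic hF ⟨ws⟩
  have hsub : ∀ v ∈ p.support, v ∈ s ∩ t :=
    fun v hv => ⟨hws v (hpall ws v hv), hwt v (hpall wt v hv)⟩
  exact reach_induce_of_walk p hsub ha hb

/-- Helly property for finite families of subtrees -/
lemma helly_aux (hF : F.IsAcyclic) : ∀ (n : ℕ) (B : Finset (Set V)), B.card ≤ n →
    B.Nonempty → (∀ s ∈ B, (F.induce s).Connected) →
    (∀ s ∈ B, ∀ t ∈ B, (s ∩ t).Nonempty) →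
    ∃ v, ∀ s ∈ B, v ∈ s := by
  intro n
  induction n with
  | zero =>
    intro B hB hne _ _
    obtain ⟨s, hs⟩ := hne
    exact absurd (Finset.card_pos.2 ⟨s, hs⟩) (by omega)
  | succ n ih =>
    intro B hB hne hconn hpair
    classical
    by_cases hcard : B.card ≤ 1
    · obtain ⟨s, hs⟩ := hne
      obtain rfl : B = {s} := Finset.eq_singleton_iff_unique_mem.2
        ⟨hs, fun t ht => Finset.card_le_one.1 hcard t ht s hs⟩
      obtain ⟨v, hv⟩ := hpair s (by simp) s (by simp)
      exact ⟨v, fun t ht => by rw [Finset.mem_singleton] at ht; subst ht; exact hv.1⟩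
    · push_neg at hcard
      obtain ⟨s, hs, t, ht, hstne⟩ := Finset.one_lt_card.1 hcard
      set B' := insert (s ∩ t) ((B.erase s).erase t) with hB'
      have hstB : (s ∩ t).Nonempty := hpair s hs t ht
      have hB'card : B'.card ≤ n := by
        have hts : t ∈ B.erase s := Finset.mem_erase.2 ⟨Ne.symm hstne, ht⟩
        have h2 : ((B.erase s).erase t).card = B.card - 1 - 1 := by
          rw [Finset.card_erase_of_mem hts, Finset.card_erase_of_mem hs]
        have h3 := Finset.card_insert_le (s ∩ t) ((B.erase s).erase t)
        rw [hB']
        omega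
      have hmem : ∀ u ∈ B', u = s ∩ t ∨ u ∈ B := by
        intro u hu
        rcases Finset.mem_insert.1 hu with h | h
        · exact Or.inl h
        · exact Or.inr (Finset.mem_of_mem_erase (Finset.mem_of_mem_erase h))
      have hconn' : ∀ u ∈ B', (F.induce u).Connected := by
        intro u hu
        rcases hmem u hu with rfl | h
        · exact inter_conn hF (hconn s hs) (hconn t ht) hstB
        · exact hconn u h
      have hpair' : ∀ u ∈ B', ∀ u' ∈ B', (u ∩ u').Nonempty := by
        intro u hu u' hu'
        rcases hmem u hu with rfl | h <;> rcases hmem u' hu' with rfl | h'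
        · simpa [Set.inter_assoc] using hstB
        · exact helly3 hF (hconn s hs) (hconn t ht) (hconn u' h')
            (hpair s hs t ht) (hpair s hs u' h') (hpair t ht u' h')
        · obtain ⟨v, hv⟩ := helly3 hF (hconn s hs) (hconn t ht) (hconn u h)
            (hpair s hs t ht) (hpair s hs u h) (hpair t ht u h)
          exact ⟨v, hv.2, hv.1⟩
        · exact hpair u h u' h'
      obtain ⟨v, hv⟩ := ih B' hB'card ⟨s ∩ t, Finset.mem_insert_self _ _⟩ hconn' hpair'
      have hvst : v ∈ s ∩ t := hv _ (Finset.mem_insert_self _ _)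
      refine ⟨v, fun u hu => ?_⟩
      by_cases hus : u = s
      · exact hus ▸ hvst.1
      by_cases hut : u = t
      · exact hut ▸ hvst.2
      · exact hv u (Finset.mem_insert_of_mem (Finset.mem_erase.2 ⟨hut, Finset.mem_erase.2 ⟨hus, hu⟩⟩))

lemma helly (hF : F.IsAcyclic) (B : Set (Set V)) (hfin : B.Finite)
    (hne : B.Nonempty) (hconn : ∀ s ∈ B, (F.induce s).Connected)
    (hpair : ∀ s ∈ B, ∀ t ∈ B, (s ∩ t).Nonempty) :
    ∃ v, ∀ s ∈ B, v ∈ s := by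
  classical
  obtain ⟨v, hv⟩ := helly_aux hF hfin.toFinset.card hfin.toFinset le_rfl
    (by simpa using hne) (by simpa using hconn) (by intro s hs t ht; simp only [Set.Finite.mem_toFinset] at hs ht; exact hpair s hs t ht)
  exact ⟨v, fun s hs => hv s (hfin.mem_toFinset.2 hs)⟩


/-- The key geometric contradiction: a chain of subtrees from `x` to `y`
avoiding `e` in its interior, with no chords back to `x`, is impossible
when `x` and `y` are disjoint subtrees both meeting the subtree `e`. -/
lemma core (hF : F.IsAcyclic) {e x y : Set V}
    (he : (F.induce e).Connected) (hx : (F.induce x).Connected) (hy : (F.induce y).Connected)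
    (hxe : (x ∩ e).Nonempty) (hye : (y ∩ e).Nonempty) (hxy : Disjoint x y)
    (l : List (Set V)) (hlne : l ≠ [])
    (hchain : (x :: l).Chain' (fun a b => (a ∩ b).Nonempty))
    (hconnl : ∀ c ∈ l, (F.induce c).Connected)
    (hlast : l.getLast hlne = y)
    (hchord : ∀ b ∈ l.tail, Disjoint x b)
    (hint : ∀ b ∈ l, b ≠ y → Disjoint e b) : False := by
  obtain ⟨px, hpxx, hpxe⟩ := hxe
  obtain ⟨py, hpyy, hpye⟩ := hye
  obtain ⟨we, hwe⟩ := walk_of_conn he hpye hpxe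
  obtain ⟨p, hpx, hgate⟩ := gate hF hx hy hxy hpxx hpyy ⟨we⟩
  have hpe : p ∈ e := by
    have := hgate px hpxx py hpyy we.reverse
    rw [support_reverse, List.mem_reverse] at this
    exact hwe p this
  -- the head of l meets x
  have hhead : (x ∩ l.head hlne).Nonempty := by
    have h1 := (List.isChain_cons.1 hchain).1
    have h2 : l.head? = some (l.head hlne) := List.head?_eq_head hlne
    exact h1 _ h2
  obtain ⟨z0, hz0x, hz0h⟩ := hhead
  have hchain' : l.Chain' (fun a b => (a ∩ b).Nonempty) := (List.isChain_cons.1 hchain).2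
  obtain ⟨w2, hw2⟩ := chain_walk l hlne hchain' hconnl z0 py hz0h (by rw [hlast]; exact hpyy)
  obtain ⟨c, hcl, hpc⟩ := hw2 p (hgate z0 hz0x py hpyy w2)
  have hl : l.head hlne :: l.tail = l := List.cons_head_tail hlne
  rw [← hl] at hcl
  rcases List.mem_cons.1 hcl with hchd | hcrest
  · -- c is the head; it is interior, so disjoint from e
    have hz0c : z0 ∈ c := by rw [hchd]; exact hz0h
    have hcy : c ≠ y := fun h => Set.disjoint_left.1 hxy hz0x (h ▸ hz0c)
    have hclmem : c ∈ l := by rw [← hl, hchd]; exact List.mem_cons_self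
    exact Set.disjoint_left.1 (hint c hclmem hcy) hpe hpc
  · exact Set.disjoint_left.1 (hchord c hcrest) hpx hpc


/-- the intersection graph of a family of sets -/
def IG (S : Set (Set V)) : SimpleGraph (Set V) where
  Adj a b := a ≠ b ∧ (a ∩ b).Nonempty ∧ a ∈ S ∧ b ∈ S
  symm := ⟨by rintro a b ⟨h1, h2, h3, h4⟩; exact ⟨h1.symm, by rwa [Set.inter_comm], h4, h3⟩⟩
  loopless := ⟨fun a h => h.1 rfl⟩

lemma ig_support_mem {S : Set (Set V)} {a b : Set V} (w : (IG S).Walk a b) (hb : b ∈ S) :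
    ∀ c ∈ w.support, c ∈ S := by
  induction w with
  | nil => intro c hc; rw [support_nil, List.mem_singleton] at hc; subst hc; exact hb
  | @cons u v z hadj q ih =>
    intro c hc
    rw [support_cons, List.mem_cons] at hc
    rcases hc with rfl | hc
    · exact hadj.2.2.1
    · exact ih hb c hc

lemma support_of_length_one {W : Type*} {G : SimpleGraph W} {a b : W}
    (p : G.Walk a b) (h : p.length = 1) : p.support = [a, b] := by
  cases p with
  | nil => simp at h
  | cons hadj q =>
    have hq : q.length = 0 := by simpa using h
    cases q with
    | nil => simp
    | cons h' q' => simp at hq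

/-- Distinct members of a pairwise-disjoint family of `e`-meeters are never
connected in the intersection graph of a family of subtrees. -/
lemma noconn (hF : F.IsAcyclic) {e : Set V} (he : (F.induce e).Connected)
    {S : Set (Set V)} (hconnS : ∀ a ∈ S, (F.induce a).Connected)
    (hM : {a | a ∈ S ∧ (a ∩ e).Nonempty}.Pairwise Disjoint) :
    ∀ x y : Set V, x ∈ S → (x ∩ e).Nonempty → y ∈ S → (y ∩ e).Nonempty →
      (IG S).Reachable x y → x = y := by
  classical
  by_contra hcon
  push_neg at hcon
  obtain ⟨x0, y0, hx0S, hx0e, hy0S, hy0e, hreach0, hne0⟩ := hcon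
  set LSet : Set ℕ := {n | ∃ x y : Set V, (x ∈ S ∧ (x ∩ e).Nonempty) ∧
    (y ∈ S ∧ (y ∩ e).Nonempty) ∧ x ≠ y ∧ ∃ w : (IG S).Walk x y, w.length = n} with hLSet
  have hLne : LSet.Nonempty := by
    obtain ⟨w⟩ := hreach0
    exact ⟨w.length, x0, y0, ⟨hx0S, hx0e⟩, ⟨hy0S, hy0e⟩, hne0, w, rfl⟩
  set n0 := sInf LSet with hn0def
  obtain ⟨x, y, ⟨hxS, hxe⟩, ⟨hyS, hye⟩, hne, w, hwlen⟩ := Nat.sInf_mem hLne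
  have hmin : ∀ k ∈ LSet, n0 ≤ k := fun k hk => Nat.sInf_le hk
  set wp := w.bypass with hwp
  have hpath : wp.IsPath := w.bypass_isPath
  have hwplen : wp.length = n0 := by
    have h1 : wp.length ≤ n0 := by rw [hn0def, ← hwlen]; exact w.length_bypass_le
    have h2 : n0 ≤ wp.length := hmin _ ⟨x, y, ⟨hxS, hxe⟩, ⟨hyS, hye⟩, hne, wp, rfl⟩
    omega
  have hxy_disj : Disjoint x y := hM ⟨hxS, hxe⟩ ⟨hyS, hye⟩ hne
  -- length at least 2
  have hn0ge2 : 2 ≤ n0 := by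
    rcases Nat.lt_or_ge n0 2 with hlt | hge
    · exfalso
      rcases (by omega : n0 = 0 ∨ n0 = 1) with h0 | h0
      · exact hne (eq_of_length_eq_zero (by rw [hwplen, h0]))
      · have hadj : (IG S).Adj x y := adj_of_length_eq_one (by rw [hwplen, h0])
        obtain ⟨z, hz⟩ := hadj.2.1
        exact Set.disjoint_left.1 hxy_disj hz.1 hz.2
    · exact hge
  have hspS : ∀ c ∈ wp.support, c ∈ S := ig_support_mem wp hyS
  have hnodup : wp.support.Nodup := (isPath_def wp).1 hpath
  -- no interior support vertex meets e
  have hInt : ∀ b ∈ wp.support, (b ∩ e).Nonempty → b = x ∨ b = y := by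
    intro b hb hbe
    by_contra hcontra
    push_neg at hcontra
    obtain ⟨hbx, hby⟩ := hcontra
    have hsplit := wp.take_spec hb
    have hlensum : (wp.takeUntil b hb).length + (wp.dropUntil b hb).length = n0 := by
      have := congrArg Walk.length hsplit
      rw [length_append] at this
      omega
    have hdrop0 : (wp.dropUntil b hb).length ≠ 0 :=
      fun h0 => hby (eq_of_length_eq_zero h0)
    have : (wp.takeUntil b hb).length ∈ LSet :=
      ⟨x, b, ⟨hxS, hxe⟩, ⟨hspS b hb, hbe⟩, Ne.symm hbx, wp.takeUntil b hb, rfl⟩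
    have := hmin _ this
    omega
  -- no chords from x to later elements
  have hChord : ∀ b ∈ wp.support.tail.tail, Disjoint x b := by
    intro b hb
    by_contra hdisj
    rw [Set.not_disjoint_iff_nonempty_inter] at hdisj
    have hbsup : b ∈ wp.support := List.mem_of_mem_tail (List.mem_of_mem_tail hb)
    have hxnot : x ∉ wp.support.tail := by
      have := hnodup
      rw [wp.support_eq_cons] at this
      exact (List.nodup_cons.1 this).1
    have hbx : b ≠ x := by
      intro h
      subst h
      exact hxnot (List.mem_of_mem_tail hb)
    have hadj : (IG S).Adj x b := ⟨Ne.symm hbx, hdisj, hxS, hspS b hbsup⟩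
    have hsplit := wp.take_spec hbsup
    have hlensum : (wp.takeUntil b hbsup).length + (wp.dropUntil b hbsup).length = n0 := by
      have := congrArg Walk.length hsplit
      rw [length_append] at this
      omega
    have htake0 : (wp.takeUntil b hbsup).length ≠ 0 :=
      fun h0 => hbx (eq_of_length_eq_zero h0).symm
    have htake1 : (wp.takeUntil b hbsup).length ≠ 1 := by
      intro h1
      -- then b is the second element of the support, contradicting nodup
      have hsupeq : wp.support = (wp.takeUntil b hbsup).support ++ (wp.dropUntil b hbsup).support.tail := by
        rw [← support_append, hsplit]
      have htsup : (wp.takeUntil b hbsup).support = [x, b] :=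
        support_of_length_one _ h1
      rw [htsup] at hsupeq
      have : wp.support.tail = b :: (wp.dropUntil b hbsup).support.tail := by
        rw [hsupeq]; rfl
      have hbint : b ∈ wp.support.tail.tail := hb
      rw [this] at hbint
      have htn : wp.support.tail.Nodup := by
        rw [wp.support_eq_cons] at hnodup
        exact (List.nodup_cons.1 hnodup).2
      rw [this] at htn
      exact (List.nodup_cons.1 htn).1 (by simpa using hbint)
    have : ((Walk.cons hadj (wp.dropUntil b hbsup)).length) ∈ LSet :=
      ⟨x, y, ⟨hxS, hxe⟩, ⟨hyS, hye⟩, hne, _, rfl⟩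
    have hhh := hmin _ this
    rw [length_cons] at hhh
    omega
  -- apply the geometric core lemma
  have htne : wp.support.tail ≠ [] := by
    intro h
    have := wp.length_support
    rw [wp.support_eq_cons, h] at this
    simp only [List.length_cons, List.length_nil] at this
    omega
  have hchainsup : wp.support.Chain' (fun a b => (a ∩ b).Nonempty) :=
    List.IsChain.imp (fun a b hab => hab.2.1) wp.isChain_adj_support
  have hchain : (x :: wp.support.tail).Chain' (fun a b => (a ∩ b).Nonempty) := by
    have := hchainsup
    rw [wp.support_eq_cons] at this
    exact this
  have hlast : wp.support.tail.getLast htne = y := by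
    rw [List.getLast_tail]
    exact wp.getLast_support
  refine core hF he (hconnS x hxS) (hconnS y hyS) hxe hye hxy_disj
    wp.support.tail htne hchain ?_ hlast hChord ?_
  · intro c hc
    exact hconnS c (hspS c (List.mem_of_mem_tail hc))
  · intro b hb hbey
    by_contra hd
    rw [Set.not_disjoint_iff_nonempty_inter] at hd
    have hbe : (b ∩ e).Nonempty := by rwa [Set.inter_comm] at hd
    rcases hInt b (List.mem_of_mem_tail hb) hbe with hbx | hby
    · have hxnot : x ∉ wp.support.tail := by
        rw [wp.support_eq_cons] at hnodup
        exact (List.nodup_cons.1 hnodup).1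
      exact hxnot (hbx ▸ hb)
    · exact hbey hby


lemma ig_reach_mem {S : Set (Set V)} {m a : Set V} (h : (IG S).Reachable m a)
    (hm : m ∈ S) : a ∈ S := by
  obtain ⟨w⟩ := h
  exact ig_support_mem w.reverse hm a (by rw [support_reverse, List.mem_reverse]; exact w.end_mem_support)

end SubtreeAux

section Combinatorial

open SubtreeAux

variable {V : Type*} [Fintype V] [DecidableEq V] {F : SimpleGraph V} {C : Set (Set V)}

/-- witness predicate: `s` meets `e` and has a maximum independent family in which
it is the unique member meeting `e`. -/
def IsWit (C : Set (Set V)) (e s : Set V) (n : ℕ) : Prop :=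
  s ∈ C ∧ (s ∩ e).Nonempty ∧ ∃ D : Set (Set V), D ⊆ C ∧ D.Pairwise Disjoint ∧
    D.ncard = n ∧ s ∈ D ∧ ∀ x ∈ D, x ≠ s → x ∩ e = ∅

lemma conn_of_clutter (hC : IsSubtreeClutter F C) {s : Set V} (hs : s ∈ C) :
    (F.induce s).Connected := hC.1 s hs

lemma nonempty_of_clutter (hC : IsSubtreeClutter F C) {s : Set V} (hs : s ∈ C) :
    s.Nonempty := by
  have := (hC.1 s hs).nonempty
  obtain ⟨⟨x, hx⟩⟩ := this
  exact ⟨x, hx⟩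

/-- Any two witnesses intersect. -/
lemma wit_inter (hF : F.IsAcyclic) (hC : IsSubtreeClutter F C) {n : ℕ}
    (hmax : ∀ E', IsIndepEdgeSet C E' → E'.ncard ≤ n)
    {e : Set V} (heC : e ∈ C) {s t : Set V}
    (hs : IsWit C e s n) (ht : IsWit C e t n) : (s ∩ t).Nonempty := by
  obtain ⟨hsC, hse, D, hDC, hDdis, hDcard, hsD, hsole⟩ := hs
  obtain ⟨htC, hte, D', hD'C, hD'dis, hD'card, htD', htsole⟩ := ht
  by_contra hst
  have hstdisj : Disjoint s t := by
    rw [Set.not_nonempty_iff_eq_empty] at hst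
    exact Set.disjoint_iff_inter_eq_empty.2 hst
  have hsnet : s ≠ t := by
    rintro rfl
    obtain ⟨z, hz⟩ := hse
    exact hst ⟨z, hz.1, hz.1⟩
  set SS := D ∪ D' with hSS
  have hSSC : SS ⊆ C := Set.union_subset hDC hD'C
  have hconnSS : ∀ a ∈ SS, (F.induce a).Connected := fun a ha => hC.1 a (hSSC ha)
  -- meeters of SS are among {s, t}
  have hmeet : ∀ a ∈ SS, (a ∩ e).Nonempty → a = s ∨ a = t := by
    rintro a (ha | ha) hae
    · by_contra hcon
      push_neg at hcon
      exact (Set.not_nonempty_iff_eq_empty.2 (hsole a ha hcon.1)) hae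
    · by_contra hcon
      push_neg at hcon
      exact (Set.not_nonempty_iff_eq_empty.2 (htsole a ha hcon.2)) hae
  have hMdis : {a | a ∈ SS ∧ (a ∩ e).Nonempty}.Pairwise Disjoint := by
    intro a ha b hb hab
    rcases hmeet a ha.1 ha.2 with rfl | rfl <;> rcases hmeet b hb.1 hb.2 with rfl | rfl
    · exact absurd rfl hab
    · exact hstdisj
    · exact hstdisj.symm
    · exact absurd rfl hab
  have hkey := noconn hF (hC.1 e heC) hconnSS hMdis
  by_cases hreach : (IG SS).Reachable s t
  · exact hsnet (hkey s t (Or.inl hsD) hse (Or.inr htD') hte hreach)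
  · -- swap argument
    set R := {a | (IG SS).Reachable s a} with hR
    have hsR : s ∈ R := Reachable.refl s
    have htR : t ∉ R := hreach
    have hRcl : ∀ a ∈ R, ∀ b, (IG SS).Adj a b → b ∈ R :=
      fun a ha b hab => Reachable.trans ha hab.reachable
    -- mixed disjointness
    have hmix : ∀ a ∈ D \ R, ∀ b ∈ D' ∩ R, Disjoint a b := by
      intro a ha b hb
      by_contra hd
      rw [Set.not_disjoint_iff_nonempty_inter] at hd
      have hne : b ≠ a := by rintro rfl; exact ha.2 hb.2
      have : (IG SS).Adj b a := ⟨hne, by rwa [Set.inter_comm], Or.inr hb.1, Or.inl ha.1⟩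
      exact ha.2 (hRcl b hb.2 a this)
    have hmix' : ∀ a ∈ D ∩ R, ∀ b ∈ D' \ R, Disjoint a b := by
      intro a ha b hb
      by_contra hd
      rw [Set.not_disjoint_iff_nonempty_inter] at hd
      have hne : a ≠ b := by rintro rfl; exact hb.2 ha.2
      have : (IG SS).Adj a b := ⟨hne, hd, Or.inl ha.1, Or.inr hb.1⟩
      exact hb.2 (hRcl a ha.2 b this)
    -- counting: (D ∩ R).ncard ≤ (D' ∩ R).ncard
    have hG1 : IsIndepEdgeSet C ((D' \ R) ∪ (D ∩ R)) := by
      constructor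
      · exact Set.union_subset (fun a ha => hD'C ha.1) (fun a ha => hDC ha.1)
      · intro a ha b hb hab
        rcases ha with ha | ha <;> rcases hb with hb | hb
        · exact hD'dis ha.1 hb.1 hab
        · exact (hmix' b hb a ha).symm
        · exact hmix' a ha b hb
        · exact hDdis ha.1 hb.1 hab
    have hcount1 : (D ∩ R).ncard ≤ (D' ∩ R).ncard := by
      have h1 := hmax _ hG1
      have h2 : ((D' \ R) ∪ (D ∩ R)).ncard = (D' \ R).ncard + (D ∩ R).ncard := by
        refine Set.ncard_union_eq ?_ (Set.toFinite _) (Set.toFinite _)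
        rw [Set.disjoint_left]
        rintro a ⟨_, haR⟩ ⟨_, haR'⟩
        exact haR haR'
      have h3 : (D' ∩ R).ncard + (D' \ R).ncard = n := by
        rw [Set.ncard_inter_add_ncard_diff_eq_ncard, hD'card]
      omega
    -- the swapped family
    set D2 := (D \ R) ∪ (D' ∩ R) with hD2
    have hD2indep : IsIndepEdgeSet C D2 := by
      constructor
      · exact Set.union_subset (fun a ha => hDC ha.1) (fun a ha => hD'C ha.1)
      · intro a ha b hb hab
        rcases ha with ha | ha <;> rcases hb with hb | hb
        · exact hDdis ha.1 hb.1 hab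
        · exact hmix a ha b hb
        · exact (hmix b hb a ha).symm
        · exact hD'dis ha.1 hb.1 hab
    have hD2card : n ≤ D2.ncard := by
      have h2 : D2.ncard = (D \ R).ncard + (D' ∩ R).ncard := by
        refine Set.ncard_union_eq ?_ (Set.toFinite _) (Set.toFinite _)
        rw [Set.disjoint_left]
        rintro a ⟨_, haR⟩ ⟨_, haR'⟩
        exact haR haR'
      have h3 : (D ∩ R).ncard + (D \ R).ncard = n := by
        rw [Set.ncard_inter_add_ncard_diff_eq_ncard, hDcard]
      omega
    -- every member of D2 is disjoint from e, and e ∉ D2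
    have hD2e : ∀ a ∈ D2, Disjoint a e := by
      rintro a (ha | ha)
      · by_contra hd
        rw [Set.not_disjoint_iff_nonempty_inter] at hd
        rcases hmeet a (Or.inl ha.1) hd with h1 | h1
        · exact ha.2 (h1 ▸ hsR)
        · have h2 : a ∩ e = ∅ := hsole a ha.1 (by rw [h1]; exact hsnet.symm)
          exact (Set.not_nonempty_iff_eq_empty.2 h2) hd
      · by_contra hd
        rw [Set.not_disjoint_iff_nonempty_inter] at hd
        rcases hmeet a (Or.inr ha.1) hd with h1 | h1
        · have h2 : a ∩ e = ∅ := htsole a ha.1 (by rw [h1]; exact hsnet)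
          exact (Set.not_nonempty_iff_eq_empty.2 h2) hd
        · exact htR (h1 ▸ ha.2)
    have heD2 : e ∉ D2 := by
      intro hmem
      obtain ⟨z, hz⟩ := nonempty_of_clutter hC heC
      exact Set.disjoint_left.1 (hD2e e hmem) hz hz
    -- contradiction with maximality
    have hbig : IsIndepEdgeSet C (insert e D2) := by
      constructor
      · exact Set.insert_subset heC hD2indep.1
      · intro a ha b hb hab
        rcases Set.mem_insert_iff.1 ha with h1 | h1 <;>
          rcases Set.mem_insert_iff.1 hb with h2 | h2
        · exact absurd (h1.trans h2.symm) hab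
        · rw [h1]; exact (hD2e b h2).symm
        · rw [h2]; exact hD2e a h1
        · exact hD2indep.2 h1 h2 hab
    have := hmax _ hbig
    rw [Set.ncard_insert_of_notMem heD2] at this
    omega

/-- From any maximum independent set `E'` avoiding `e`, some member is a witness. -/
lemma exists_wit (hF : F.IsAcyclic) (hC : IsSubtreeClutter F C) {n : ℕ}
    (hmax : ∀ E'', IsIndepEdgeSet C E'' → E''.ncard ≤ n)
    {E E' : Set (Set V)} (hE : IsIndepEdgeSet C E) (hE' : IsIndepEdgeSet C E')
    (hEn : E.ncard = n) (hE'n : E'.ncard = n)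
    {e : Set V} (heE : e ∈ E) (heE' : e ∉ E') :
    ∃ s ∈ E', IsWit C e s n := by
  classical
  have heC : e ∈ C := hE.1 heE
  set SS := (E ∪ E') \ {e} with hSSdef
  have hSSC : SS ⊆ C := by
    rintro a ⟨(ha | ha), _⟩
    · exact hE.1 ha
    · exact hE'.1 ha
  have hconnSS : ∀ a ∈ SS, (F.induce a).Connected := fun a ha => hC.1 a (hSSC ha)
  have heSS : e ∉ SS := fun h => h.2 rfl
  have hE'SS : ∀ a ∈ E', a ∈ SS := fun a ha =>
    ⟨Or.inr ha, fun h => heE' (Set.mem_singleton_iff.1 h ▸ ha)⟩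
  have hEdis : ∀ a ∈ E, a ≠ e → a ∩ e = ∅ := fun a ha hne =>
    Set.disjoint_iff_inter_eq_empty.1 (hE.2 ha heE hne)
  set M := {a | a ∈ SS ∧ (a ∩ e).Nonempty} with hMdef
  have hMsub : ∀ a ∈ M, a ∈ E' := by
    rintro a ⟨⟨(ha | ha), hane⟩, hae⟩
    · exact absurd (hEdis a ha (by simpa using hane)) (Set.nonempty_iff_ne_empty.1 hae)
    · exact ha
  have hMdis : M.Pairwise Disjoint := fun a ha b hb hab =>
    hE'.2 (hMsub a ha) (hMsub b hb) hab
  have hkey := noconn hF (hC.1 e heC) hconnSS hMdis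
  -- M is nonempty
  have hMne : M.Nonempty := by
    by_contra hMn
    rw [Set.not_nonempty_iff_eq_empty] at hMn
    have hdisj : ∀ a ∈ E', Disjoint a e := by
      intro a ha
      by_contra hd
      rw [Set.not_disjoint_iff_nonempty_inter] at hd
      have : a ∈ M := ⟨hE'SS a ha, hd⟩
      rw [hMn] at this
      exact this
    have hbig : IsIndepEdgeSet C (insert e E') := by
      constructor
      · exact Set.insert_subset heC hE'.1
      · intro a ha b hb hab
        rcases Set.mem_insert_iff.1 ha with h1 | h1 <;>
          rcases Set.mem_insert_iff.1 hb with h2 | h2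
        · exact absurd (h1.trans h2.symm) hab
        · rw [h1]; exact (hdisj b h2).symm
        · rw [h2]; exact hdisj a h1
        · exact hE'.2 h1 h2 hab
    have := hmax _ hbig
    rw [Set.ncard_insert_of_notMem heE'] at this
    omega
  -- reachability closures
  set Cl : Set V → Set (Set V) := fun m => {a | (IG SS).Reachable m a} with hCldef
  have hClself : ∀ m, m ∈ Cl m := fun m => Reachable.refl m
  have hClSS : ∀ m ∈ SS, Cl m ⊆ SS := fun m hm a ha => ig_reach_mem ha hm
  have hClcl : ∀ m, ∀ a ∈ Cl m, ∀ b, (IG SS).Adj a b → b ∈ Cl m :=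
    fun m a ha b hab => Reachable.trans ha hab.reachable
  have hCldisj : ∀ i ∈ M, ∀ j ∈ M, i ≠ j → Cl i ∩ Cl j = ∅ := by
    intro i hi j hj hij
    rw [Set.eq_empty_iff_forall_notMem]
    rintro a ⟨hai, haj⟩
    exact hij (hkey i j hi.1 hi.2 hj.1 hj.2 (hai.trans haj.symm))
  -- swap counting lemmas
  have swapA : ∀ R : Set (Set V), R ⊆ SS → (∀ a ∈ R, ∀ b, (IG SS).Adj a b → b ∈ R) →
      (E ∩ R).ncard ≤ (E' ∩ R).ncard := by
    intro R hRS hRcl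
    have hmix : ∀ a ∈ E ∩ R, ∀ b ∈ E' \ R, Disjoint a b := by
      intro a ha b hb
      by_contra hd
      rw [Set.not_disjoint_iff_nonempty_inter] at hd
      have hne : a ≠ b := by rintro rfl; exact hb.2 ha.2
      exact hb.2 (hRcl a ha.2 b ⟨hne, hd, hRS ha.2, hE'SS b hb.1⟩)
    have hG : IsIndepEdgeSet C ((E' \ R) ∪ (E ∩ R)) := by
      constructor
      · exact Set.union_subset (fun a ha => hE'.1 ha.1) (fun a ha => hE.1 ha.1)
      · intro a ha b hb hab
        rcases ha with ha | ha <;> rcases hb with hb | hb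
        · exact hE'.2 ha.1 hb.1 hab
        · exact (hmix b hb a ha).symm
        · exact hmix a ha b hb
        · exact hE.2 ha.1 hb.1 hab
    have h1 := hmax _ hG
    have h2 : ((E' \ R) ∪ (E ∩ R)).ncard = (E' \ R).ncard + (E ∩ R).ncard := by
      refine Set.ncard_union_eq ?_ (Set.toFinite _) (Set.toFinite _)
      rw [Set.disjoint_left]
      rintro a ⟨_, haR⟩ ⟨_, haR'⟩
      exact haR haR'
    have h3 : (E' ∩ R).ncard + (E' \ R).ncard = n := by
      rw [Set.ncard_inter_add_ncard_diff_eq_ncard, hE'n]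
    omega
  have swapB : ∀ R : Set (Set V), R ⊆ SS → (∀ a ∈ R, ∀ b, (IG SS).Adj a b → b ∈ R) →
      (E' ∩ R).ncard ≤ (E ∩ R).ncard + 1 := by
    intro R hRS hRcl
    have hmix : ∀ a ∈ (E \ {e}) \ R, ∀ b ∈ E' ∩ R, Disjoint a b := by
      intro a ha b hb
      by_contra hd
      rw [Set.not_disjoint_iff_nonempty_inter] at hd
      have hne : b ≠ a := by rintro rfl; exact ha.2 hb.2
      have haSS : a ∈ SS := ⟨Or.inl ha.1.1, ha.1.2⟩
      exact ha.2 (hRcl b hb.2 a ⟨hne, by rwa [Set.inter_comm], hRS hb.2, haSS⟩)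
    have hG : IsIndepEdgeSet C (((E \ {e}) \ R) ∪ (E' ∩ R)) := by
      constructor
      · exact Set.union_subset (fun a ha => hE.1 ha.1.1) (fun a ha => hE'.1 ha.1)
      · intro a ha b hb hab
        rcases ha with ha | ha <;> rcases hb with hb | hb
        · exact hE.2 ha.1.1 hb.1.1 hab
        · exact hmix a ha b hb
        · exact (hmix b hb a ha).symm
        · exact hE'.2 ha.1 hb.1 hab
    have h1 := hmax _ hG
    have h2 : (((E \ {e}) \ R) ∪ (E' ∩ R)).ncard = ((E \ {e}) \ R).ncard + (E' ∩ R).ncard := by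
      refine Set.ncard_union_eq ?_ (Set.toFinite _) (Set.toFinite _)
      rw [Set.disjoint_left]
      rintro a ⟨_, haR⟩ ⟨_, haR'⟩
      exact haR haR'
    have hER : (E \ {e}) ∩ R = E ∩ R := by
      ext a
      constructor
      · rintro ⟨⟨h1, _⟩, h2⟩; exact ⟨h1, h2⟩
      · rintro ⟨h1, h2⟩; exact ⟨⟨h1, fun h => heSS (h ▸ hRS h2)⟩, h2⟩
    have h3 : ((E \ {e}) ∩ R).ncard + ((E \ {e}) \ R).ncard = n - 1 := by
      rw [Set.ncard_inter_add_ncard_diff_eq_ncard, Set.ncard_diff_singleton_of_mem heE, hEn]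
    have h4 : 1 ≤ n := by
      have : ({e} : Set (Set V)).ncard ≤ E.ncard := Set.ncard_le_ncard (by simpa using heE) (Set.toFinite E)
      rw [Set.ncard_singleton] at this
      omega
    rw [hER] at h3
    omega
  -- the union of all branches
  set MF : Finset (Set V) := (Set.toFinite M).toFinset with hMFdef
  have hMFmem : ∀ m, m ∈ MF ↔ m ∈ M := fun m => Set.Finite.mem_toFinset _
  set Y := ⋃ m ∈ MF, Cl m with hYdef
  have hYmem : ∀ a, a ∈ Y ↔ ∃ m ∈ M, a ∈ Cl m := by
    intro a
    simp only [hYdef, Set.mem_iUnion, exists_prop]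
    constructor
    · rintro ⟨m, hm, hma⟩; exact ⟨m, (hMFmem m).1 hm, hma⟩
    · rintro ⟨m, hm, hma⟩; exact ⟨m, (hMFmem m).2 hm, hma⟩
  have hYS : Y ⊆ SS := by
    intro a ha
    obtain ⟨m, hm, hma⟩ := (hYmem a).1 ha
    exact hClSS m hm.1 hma
  have hYcl : ∀ a ∈ Y, ∀ b, (IG SS).Adj a b → b ∈ Y := by
    intro a ha b hab
    obtain ⟨m, hm, hma⟩ := (hYmem a).1 ha
    exact (hYmem b).2 ⟨m, hm, hClcl m a hma b hab⟩
  have hClY : ∀ j ∈ M, Cl j ⊆ Y := fun j hj a ha => (hYmem a).2 ⟨j, hj, ha⟩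
  -- the summation bound in case all branches balance
  have hsum : ∀ (G : Finset (Set V)), ↑G ⊆ M →
      (∀ m ∈ G, (E' ∩ Cl m).ncard ≤ (E ∩ Cl m).ncard) →
      (E' ∩ ⋃ m ∈ G, Cl m).ncard ≤ (E ∩ ⋃ m ∈ G, Cl m).ncard := by
    intro G
    induction G using Finset.induction_on with
    | empty => intro _ _; simp
    | @insert m G hmG ih =>
      intro hGM hball
      have hmM : m ∈ M := hGM (Finset.mem_insert_self m G)
      have hGM' : ↑G ⊆ M := fun a ha => hGM (by simpa using Or.inr ha)
      have hdis : Disjoint (Cl m) (⋃ m' ∈ G, Cl m') := by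
        rw [Set.disjoint_left]
        intro a ham hau
        rw [Set.mem_iUnion₂] at hau
        obtain ⟨m', hm', ham'⟩ := hau
        have hmm' : m ≠ m' := by rintro rfl; exact hmG hm'
        have := hCldisj m hmM m' (hGM' hm') hmm'
        rw [Set.eq_empty_iff_forall_notMem] at this
        exact this a ⟨ham, ham'⟩
      have hsplit : (⋃ m' ∈ insert m G, Cl m') = Cl m ∪ ⋃ m' ∈ G, Cl m' := by
        simp [Set.iUnion_iUnion_eq_or_left]
      rw [hsplit, Set.inter_union_distrib_left, Set.inter_union_distrib_left]
      rw [Set.ncard_union_eq (hdis.mono Set.inter_subset_right Set.inter_subset_right)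
        (Set.toFinite _) (Set.toFinite _),
        Set.ncard_union_eq (hdis.mono Set.inter_subset_right Set.inter_subset_right)
        (Set.toFinite _) (Set.toFinite _)]
      have h1 := hball m (Finset.mem_insert_self m G)
      have h2 := ih hGM' (fun m' hm' => hball m' (Finset.mem_insert_of_mem hm'))
      omega
  -- choose the branch j
  have hchoice : ∃ j ∈ M, (E' ∩ (Y \ Cl j)).ncard ≤ (E ∩ (Y \ Cl j)).ncard := by
    have hsplitY : ∀ j ∈ M, (E' ∩ Y).ncard = (E' ∩ (Y \ Cl j)).ncard + (E' ∩ Cl j).ncard ∧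
        (E ∩ Y).ncard = (E ∩ (Y \ Cl j)).ncard + (E ∩ Cl j).ncard := by
      intro j hj
      have hYeq : (Y \ Cl j) ∪ Cl j = Y := Set.diff_union_of_subset (hClY j hj)
      have hdisj : Disjoint (Y \ Cl j) (Cl j) := Set.disjoint_sdiff_left
      constructor
      · conv_lhs => rw [← hYeq]
        rw [Set.inter_union_distrib_left]
        exact Set.ncard_union_eq (hdisj.mono Set.inter_subset_right Set.inter_subset_right)
          (Set.toFinite _) (Set.toFinite _)
      · conv_lhs => rw [← hYeq]
        rw [Set.inter_union_distrib_left]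
        exact Set.ncard_union_eq (hdisj.mono Set.inter_subset_right Set.inter_subset_right)
          (Set.toFinite _) (Set.toFinite _)
    by_cases hA : ∃ j ∈ M, (E ∩ Cl j).ncard + 1 ≤ (E' ∩ Cl j).ncard
    · obtain ⟨j, hj, hstrict⟩ := hA
      refine ⟨j, hj, ?_⟩
      have hB := swapB Y hYS hYcl
      obtain ⟨e1, e2⟩ := hsplitY j hj
      omega
    · push_neg at hA
      obtain ⟨j0, hj0⟩ := hMne
      refine ⟨j0, hj0, ?_⟩
      have hYb : (E' ∩ Y).ncard ≤ (E ∩ Y).ncard := by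
        have := hsum MF (fun a ha => (hMFmem a).1 ha)
          (fun m hm => by have := hA m ((hMFmem m).1 hm); omega)
        exact this
      have hA0 : (E ∩ Cl j0).ncard ≤ (E' ∩ Cl j0).ncard :=
        swapA (Cl j0) (hClSS j0 hj0.1) (hClcl j0)
      obtain ⟨e1, e2⟩ := hsplitY j0 hj0
      omega
  obtain ⟨j, hjM, hZcount⟩ := hchoice
  set Zj := Y \ Cl j with hZjdef
  have hZjS : Zj ⊆ SS := fun a ha => hYS ha.1
  have hZjcl : ∀ a ∈ Zj, ∀ b, (IG SS).Adj a b → b ∈ Zj := by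
    intro a ha b hab
    refine ⟨hYcl a ha.1 b hab, ?_⟩
    intro hbCl
    exact ha.2 (hClcl j b hbCl a hab.symm)
  -- the witness family
  set Dj := (E' \ Zj) ∪ (E ∩ Zj) with hDjdef
  have hmixj : ∀ a ∈ E ∩ Zj, ∀ b ∈ E' \ Zj, Disjoint a b := by
    intro a ha b hb
    by_contra hd
    rw [Set.not_disjoint_iff_nonempty_inter] at hd
    have hne : a ≠ b := by rintro rfl; exact hb.2 ha.2
    exact hb.2 (hZjcl a ha.2 b ⟨hne, hd, hZjS ha.2, hE'SS b hb.1⟩)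
  have hDjindep : IsIndepEdgeSet C Dj := by
    constructor
    · exact Set.union_subset (fun a ha => hE'.1 ha.1) (fun a ha => hE.1 ha.1)
    · intro a ha b hb hab
      rcases ha with ha | ha <;> rcases hb with hb | hb
      · exact hE'.2 ha.1 hb.1 hab
      · exact (hmixj b hb a ha).symm
      · exact hmixj a ha b hb
      · exact hE.2 ha.1 hb.1 hab
  have hDjcard : Dj.ncard = n := by
    have h2 : Dj.ncard = (E' \ Zj).ncard + (E ∩ Zj).ncard := by
      refine Set.ncard_union_eq ?_ (Set.toFinite _) (Set.toFinite _)
      rw [Set.disjoint_left]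
      rintro a ⟨_, haR⟩ ⟨_, haR'⟩
      exact haR haR'
    have h3 : (E' ∩ Zj).ncard + (E' \ Zj).ncard = n := by
      rw [Set.ncard_inter_add_ncard_diff_eq_ncard, hE'n]
    have h4 := hmax _ hDjindep
    omega
  have hjE' : j ∈ E' := hMsub j hjM
  have hjDj : j ∈ Dj := Or.inl ⟨hjE', fun hz => hz.2 (hClself j)⟩
  refine ⟨j, hjE', hE'.1 hjE', hjM.2, Dj, hDjindep.1, hDjindep.2, hDjcard, hjDj, ?_⟩
  intro x hx hxj
  rcases hx with hx | hx
  · by_contra hxe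
    have hxe' : (x ∩ e).Nonempty := Set.nonempty_iff_ne_empty.2 hxe
    have hxM : x ∈ M := ⟨hE'SS x hx.1, hxe'⟩
    have hxY : x ∈ Y := (hYmem x).2 ⟨x, hxM, hClself x⟩
    have hxCl : x ∈ Cl j := by
      by_contra hxCl
      exact hx.2 ⟨hxY, hxCl⟩
    exact hxj (hkey j x hjM.1 hjM.2 hxM.1 hxM.2 hxCl).symm
  · have hxSS : x ∈ SS := hZjS hx.2
    exact hEdis x hx.1 (fun h => heSS (h ▸ hxSS))

end Combinatorial


/-- Let `F` be a forest, `C` a subtree clutter of `F`, `E` a maximum-cardinality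
independent set of edges of `C`, and `e ∈ E`.  Then there is a vertex `v` of `e`
such that `E \ {e}` is a maximum-cardinality independent set of edges of the
deletion clutter `C \ {v}` (the edges of `C` avoiding `v`). -/
theorem exists_vertex_deletion_preserving_maximality {V : Type*} [Fintype V]
    (F : SimpleGraph V) (hF : F.IsAcyclic) (C : Set (Set V))
    (hC : IsSubtreeClutter F C) (E : Set (Set V)) (hE : IsIndepEdgeSet C E)
    (hmax : ∀ E', IsIndepEdgeSet C E' → E'.ncard ≤ E.ncard)
    (e : Set V) (he : e ∈ E) :
    ∃ v ∈ e,
      IsIndepEdgeSet {s ∈ C | v ∉ s} (E \ {e}) ∧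
      ∀ E', IsIndepEdgeSet {s ∈ C | v ∉ s} E' → E'.ncard ≤ (E \ {e}).ncard := by
  classical
  open SubtreeAux in
  set n := E.ncard with hn
  have heC : e ∈ C := hE.1 he
  have henon : e.Nonempty := nonempty_of_clutter hC heC
  set B := {s | IsWit C e s n} with hBdef
  have heB : e ∈ B := ⟨heC, by rwa [Set.inter_self], E, hE.1, hE.2, rfl, he,
    fun x hx hxe => Set.disjoint_iff_inter_eq_empty.1 (hE.2 hx he hxe)⟩
  have hBconn : ∀ s ∈ B, (F.induce s).Connected := fun s hs => hC.1 s hs.1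
  have hBpair : ∀ s ∈ B, ∀ t ∈ B, (s ∩ t).Nonempty :=
    fun s hs t ht => wit_inter hF hC hmax heC hs ht
  obtain ⟨v, hv⟩ := helly hF B (Set.toFinite B) ⟨e, heB⟩ hBconn hBpair
  have hve : v ∈ e := hv e heB
  refine ⟨v, hve, ⟨?_, fun a ha b hb hab => hE.2 ha.1 hb.1 hab⟩, ?_⟩
  · rintro s ⟨hsE, hse⟩
    refine ⟨hE.1 hsE, fun hvs => ?_⟩
    have hd := hE.2 hsE he (by simpa using hse)
    exact Set.disjoint_left.1 hd hvs hve
  · intro E' hE'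
    by_contra hgt
    push_neg at hgt
    have hEfin : E.Finite := Set.toFinite E
    have hEcard : (E \ {e}).ncard = n - 1 := Set.ncard_diff_singleton_of_mem he
    have hE'C : IsIndepEdgeSet C E' := ⟨fun a ha => (hE'.1 ha).1, hE'.2⟩
    have hle := hmax E' hE'C
    have h1 : 1 ≤ n := by
      have : 0 < E.ncard := Set.ncard_pos (Set.toFinite E) |>.2 ⟨e, he⟩
      omega
    have hE'n : E'.ncard = n := by omega
    have heE' : e ∉ E' := fun h => (hE'.1 h).2 hve
    obtain ⟨j, hjE', hwit⟩ := exists_wit hF hC hmax hE hE'C rfl hE'n he heE'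
    exact (hE'.1 hjE').2 (hv j hwit)
end

section
/- For any tree T and any positive integer ℓ, the clutter of paths of length ℓ in T satisfies the König property: the maximum number of vertex-disjoint paths of length ℓ equals the minimum number of vertices needed to meet every path of length ℓ. -/
/-- The clutter of paths of length `ℓ` of a graph `T`: the edges are the vertex
sets of the paths of length `ℓ` in `T`. -/
def pathClutter {V : Type*} (T : SimpleGraph V) (ℓ : ℕ) : Set (Set V) :=
  {S | ∃ (x y : V) (p : T.Walk x y), p.IsPath ∧ p.length = ℓ ∧
    S = {v | v ∈ p.support}}

/-- A vertex cover of a clutter: a set of vertices meeting every edge. -/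
def IsVertexCover {V : Type*} (C : Set (Set V)) (W : Set V) : Prop :=
  ∀ s ∈ C, (s ∩ W).Nonempty

open SimpleGraph
namespace PathKonig
variable {V : Type*} {T : SimpleGraph V}


lemma path_eq_of_tree (hT : T.IsTree) {x y : V} (p q : T.Walk x y)
    (hp : p.IsPath) (hq : q.IsPath) : p = q := by
  have := hT.IsAcyclic.path_unique ⟨p, hp⟩ ⟨q, hq⟩
  exact congrArg Subtype.val this

lemma length_eq_dist (hT : T.IsTree) {x y : V} (p : T.Walk x y) (hp : p.IsPath) :
    p.length = T.dist x y := by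
  obtain ⟨q, hq, hql⟩ := hT.isConnected.exists_path_of_dist x y
  rw [path_eq_of_tree hT p q hp hq, hql]

lemma dist_add_of_mem_support (hT : T.IsTree) {x y z : V} (p : T.Walk x y) (hp : p.IsPath)
    (hz : z ∈ p.support) : T.dist x z + T.dist z y = T.dist x y := by
  classical
  have h1 := length_eq_dist hT _ (hp.takeUntil hz)
  have h2 := length_eq_dist hT _ (hp.dropUntil hz)
  have h3 := length_eq_dist hT p hp
  have := congrArg SimpleGraph.Walk.length (p.take_spec hz)
  rw [SimpleGraph.Walk.length_append] at this
  omega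

/-- If `z` is metrically between `x` and `y`, then `z` lies on any path from `x` to `y`. -/
lemma mem_support_of_dist (hT : T.IsTree) {x y z : V} (p : T.Walk x y) (hp : p.IsPath)
    (h : T.dist x z + T.dist z y = T.dist x y) : z ∈ p.support := by
  classical
  obtain ⟨q1, hq1, hq1l⟩ := hT.isConnected.exists_path_of_dist x z
  obtain ⟨q2, hq2, hq2l⟩ := hT.isConnected.exists_path_of_dist z y
  have hdisj : ∀ u, u ∈ q1.support → u ∈ q2.support → u = z := by
    intro u hu1 hu2
    have e1 := dist_add_of_mem_support hT q1 hq1 hu1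
    have e2 := dist_add_of_mem_support hT q2 hq2 hu2
    have tri := hT.isConnected.dist_triangle (u := x) (v := u) (w := y)
    have hz0 : T.dist u z = 0 := by omega
    exact (hT.isConnected.dist_eq_zero_iff).mp hz0
  have happ : (q1.append q2).IsPath := by
    rw [SimpleGraph.Walk.isPath_def, SimpleGraph.Walk.support_append]
    refine List.Nodup.append hq1.support_nodup (hq2.support_nodup.tail) ?_
    intro u hu1 hu2
    have hu2' : u ∈ q2.support := List.mem_of_mem_tail hu2
    have huz : u = z := hdisj u hu1 hu2'
    have hcons : q2.support = z :: q2.support.tail := q2.support_eq_cons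
    have hnd := hq2.support_nodup
    rw [hcons, List.nodup_cons] at hnd
    exact hnd.1 (huz ▸ hu2)
  rw [path_eq_of_tree hT p (q1.append q2) hp happ]
  rw [SimpleGraph.Walk.mem_support_append_iff]
  exact Or.inl q1.end_mem_support


/-- `u` is an ancestor of `w` with respect to root `r`. -/
def Anc (T : SimpleGraph V) (r u w : V) : Prop :=
  T.dist r w = T.dist r u + T.dist u w

lemma anc_refl (r u : V) : Anc T r u u := by simp [Anc]

lemma anc_trans (hT : T.IsTree) {r u v w : V} (h1 : Anc T r u v) (h2 : Anc T r v w) :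
    Anc T r u w := by
  have t1 := hT.isConnected.dist_triangle (u := u) (v := v) (w := w)
  have t2 := hT.isConnected.dist_triangle (u := r) (v := u) (w := w)
  unfold Anc at *
  omega

lemma anc_eq (hT : T.IsTree) {r u w : V} (h : Anc T r u w) (hd : T.dist r u = T.dist r w) :
    u = w := by
  have : T.dist u w = 0 := by unfold Anc at h; omega
  exact (hT.isConnected.dist_eq_zero_iff).mp this

lemma adj_anc (hT : T.IsTree) (r : V) {x x' : V} (h : T.Adj x x') :
    Anc T r x x' ∨ Anc T r x' x := by
  classical
  obtain ⟨p, hp, hpl⟩ := hT.isConnected.exists_path_of_dist r x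
  have hd1 : T.dist x x' = 1 := dist_eq_one_iff_adj.mpr h
  have hd1' : T.dist x' x = 1 := dist_eq_one_iff_adj.mpr h.symm
  by_cases hx' : x' ∈ p.support
  · right
    have := dist_add_of_mem_support hT p hp hx'
    unfold Anc
    omega
  · left
    have hcp : (p.concat h).IsPath := by
      rw [Walk.isPath_def, Walk.support_concat]
      refine List.Nodup.append hp.support_nodup (List.nodup_singleton x') ?_
      intro a ha hb
      rw [List.mem_singleton] at hb
      subst hb
      exact hx' ha
    have hl := length_eq_dist hT _ hcp
    rw [Walk.length_concat, hpl] at hl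
    unfold Anc
    omega

lemma anc_comparable (hT : T.IsTree) {r a b c : V} (hac : Anc T r a c) (hbc : Anc T r b c) :
    Anc T r a b ∨ Anc T r b a := by
  classical
  obtain ⟨q, hq, hql⟩ := hT.isConnected.exists_path_of_dist r c
  have ha : a ∈ q.support := mem_support_of_dist hT q hq hac.symm
  have hb : b ∈ q.support := mem_support_of_dist hT q hq hbc.symm
  have hb' : b ∈ ((q.takeUntil a ha).append (q.dropUntil a ha)).support := by
    rw [q.take_spec ha]; exact hb
  rw [Walk.mem_support_append_iff] at hb'
  rcases hb' with hb1 | hb2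
  · right
    have := dist_add_of_mem_support hT _ (hq.takeUntil ha) hb1
    unfold Anc
    omega
  · left
    have h2 := dist_add_of_mem_support hT _ (hq.dropUntil ha) hb2
    unfold Anc at *
    omega

lemma mem_support_of_between (hT : T.IsTree) {x y t u v : V} (p : T.Walk x y) (hp : p.IsPath)
    (ht : t ∈ p.support) (hu : u ∈ p.support)
    (h : T.dist t v + T.dist v u = T.dist t u) : v ∈ p.support := by
  classical
  have hu' : u ∈ ((p.takeUntil t ht).append (p.dropUntil t ht)).support := by
    rw [p.take_spec ht]; exact hu
  rw [Walk.mem_support_append_iff] at hu'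
  rcases hu' with h1 | h2
  · -- u is before t: use the path from u to t inside takeUntil
    have hq : ((p.takeUntil t ht).dropUntil u h1).IsPath := (hp.takeUntil ht).dropUntil h1
    have hv : v ∈ ((p.takeUntil t ht).dropUntil u h1).support := by
      apply mem_support_of_dist hT _ hq
      have c1 : T.dist u v = T.dist v u := SimpleGraph.dist_comm
      have c2 : T.dist v t = T.dist t v := SimpleGraph.dist_comm
      have c3 : T.dist u t = T.dist t u := SimpleGraph.dist_comm
      omega
    exact p.support_takeUntil_subset ht (Walk.support_dropUntil_subset _ h1 hv)
  · have hq : ((p.dropUntil t ht).takeUntil u h2).IsPath := (hp.dropUntil ht).takeUntil h2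
    have hv : v ∈ ((p.dropUntil t ht).takeUntil u h2).support := by
      exact mem_support_of_dist hT _ hq h
    exact p.support_dropUntil_subset ht (Walk.support_takeUntil_subset _ h2 hv)

lemma exists_top (hT : T.IsTree) (r : V) {x y : V} (p : T.Walk x y) (hp : p.IsPath) :
    ∃ m ∈ p.support, ∀ z ∈ p.support, Anc T r m z := by
  induction p with
  | nil =>
    refine ⟨_, Walk.start_mem_support _, ?_⟩
    intro z hz
    simp only [Walk.support_nil, List.mem_singleton] at hz
    subst hz; exact anc_refl r _
  | @cons x w y h q ih =>
    obtain ⟨m, hm, hmall⟩ := ih hp.of_cons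
    by_cases hmx : Anc T r m x
    · refine ⟨m, by simp [hm], ?_⟩
      intro z hz
      rw [Walk.support_cons, List.mem_cons] at hz
      rcases hz with rfl | hz
      · exact hmx
      · exact hmall z hz
    · refine ⟨x, Walk.start_mem_support _, ?_⟩
      intro z hz
      rw [Walk.support_cons, List.mem_cons] at hz
      rcases hz with rfl | hz
      · exact anc_refl r z
      · have hmw : Anc T r m w := hmall w (Walk.start_mem_support q)
        have hxm : Anc T r x m := by
          rcases adj_anc hT r h with hxw | hwx
          · rcases anc_comparable hT hxw hmw with h1 | h2
            · exact h1
            · exact absurd h2 hmx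
          · exact absurd (anc_trans hT hmw hwx) hmx
        exact anc_trans hT hxm (hmall z hz)

lemma konig_aux [Fintype V] (hT : T.IsTree) (r : V) (ℓ : ℕ) :
    ∀ (n : ℕ) (S : Set V), S.ncard ≤ n → (∀ u ∈ S, ∀ w, Anc T r w u → w ∈ S) →
    ∃ (E : Set (Set V)) (W : Set V),
      E ⊆ pathClutter T ℓ ∧ (∀ e ∈ E, e ⊆ S) ∧ E.Pairwise Disjoint ∧ W ⊆ S ∧
      (∀ s ∈ pathClutter T ℓ, s ⊆ S → (s ∩ W).Nonempty) ∧ E.ncard = W.ncard := by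
  intro n
  induction n with
  | zero =>
    intro S hS _
    have hSempty : S = ∅ := by
      rw [← Set.ncard_eq_zero S.toFinite]; omega
    refine ⟨∅, ∅, by simp, by simp, by simp, by simp, ?_, by simp⟩
    rintro s ⟨x, y, p, hp, hl, rfl⟩ hsS
    exact absurd (hsS (show x ∈ {v | v ∈ p.support} from p.start_mem_support)) (by simp [hSempty])
  | succ n ih =>
    intro S hS hanc
    by_cases hex : ∃ s ∈ pathClutter T ℓ, s ⊆ S
    · -- the set of "tops" of length-ℓ paths inside S
      set TT : Set V := {t | ∃ (x y : V) (p : T.Walk x y), p.IsPath ∧ p.length = ℓ ∧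
        {v | v ∈ p.support} ⊆ S ∧ t ∈ p.support ∧ ∀ z ∈ p.support, Anc T r t z} with hTT
      have hTTne : TT.Nonempty := by
        obtain ⟨s, ⟨x, y, p, hp, hl, rfl⟩, hsS⟩ := hex
        obtain ⟨m, hm, hmall⟩ := exists_top hT r p hp
        exact ⟨m, x, y, p, hp, hl, hsS, hm, hmall⟩
      obtain ⟨v, hvTT, hvmax⟩ := Set.exists_max_image TT (T.dist r) TT.toFinite hTTne
      obtain ⟨x, y, P, hP, hPl, hPS, hvP, hvtop⟩ := hvTT
      set S' : Set V := S \ {u | Anc T r v u} with hS'def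
      have hvS : v ∈ S := hPS hvP
      have hvS' : v ∉ S' := fun h => h.2 (anc_refl r v)
      have hanc' : ∀ u ∈ S', ∀ w, Anc T r w u → w ∈ S' := by
        rintro u ⟨huS, huv⟩ w hw
        refine ⟨hanc u huS w hw, fun hvw => huv (anc_trans hT hvw hw)⟩
      have hS'card : S'.ncard ≤ n := by
        have hlt : S'.ncard < S.ncard :=
          Set.ncard_lt_ncard ⟨Set.diff_subset, fun hsub => hvS' (hsub hvS)⟩ S.toFinite
        omega
      obtain ⟨E', W', hE'C, hE'S, hE'pw, hW'S, hcov', hcard'⟩ := ih S' hS'card hanc'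
      set Ps : Set V := {z | z ∈ P.support} with hPsdef
      have hPsanc : ∀ z ∈ Ps, Anc T r v z := hvtop
      have hPsC : Ps ∈ pathClutter T ℓ := ⟨x, y, P, hP, hPl, rfl⟩
      have hdisjPs : ∀ e ∈ E', Disjoint Ps e := by
        intro e he
        rw [Set.disjoint_left]
        intro a haPs hae
        exact (hE'S e he hae).2 (hPsanc a haPs)
      have hPsE' : Ps ∉ E' := fun h => (hE'S Ps h hvP).2 (anc_refl r v)
      have hvW' : v ∉ W' := fun h => hvS' (hW'S h)
      refine ⟨insert Ps E', insert v W', ?_, ?_, ?_, ?_, ?_, ?_⟩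
      · exact Set.insert_subset hPsC hE'C
      · rintro e (rfl | he)
        · exact hPS
        · exact (hE'S e he).trans Set.diff_subset
      · exact Set.pairwise_insert.mpr ⟨hE'pw, fun e he _ => ⟨hdisjPs e he, (hdisjPs e he).symm⟩⟩
      · exact Set.insert_subset hvS (hW'S.trans Set.diff_subset)
      · rintro s hsC hsS
        obtain ⟨x', y', Q, hQ, hQl, rfl⟩ := hsC
        by_cases hint : ∃ u ∈ Q.support, Anc T r v u
        · obtain ⟨u, huQ, hvu⟩ := hint
          obtain ⟨t', ht'Q, ht'top⟩ := exists_top hT r Q hQ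
          rcases anc_comparable hT (ht'top u huQ) hvu with h1 | h2
          · -- t' is an ancestor of v : v lies between t' and u on Q
            have htu := ht'top u huQ
            have hbetween : T.dist t' v + T.dist v u = T.dist t' u := by
              unfold Anc at h1 hvu htu; omega
            have hvQ := mem_support_of_between hT Q hQ ht'Q huQ hbetween
            exact ⟨v, hvQ, Set.mem_insert v W'⟩
          · -- v is an ancestor of t' : by maximality v = t'
            have ht'TT : t' ∈ TT := ⟨x', y', Q, hQ, hQl, hsS, ht'Q, ht'top⟩
            have hle := hvmax t' ht'TT
            have hge : T.dist r v ≤ T.dist r t' := by unfold Anc at h2; omega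
            have hvt : v = t' := anc_eq hT h2 (le_antisymm hge hle)
            exact ⟨v, hvt ▸ ht'Q, Set.mem_insert v W'⟩
        · push_neg at hint
          have hsS' : {z | z ∈ Q.support} ⊆ S' := fun z hz => ⟨hsS hz, hint z hz⟩
          obtain ⟨w, hw1, hw2⟩ := hcov' _ ⟨x', y', Q, hQ, hQl, rfl⟩ hsS'
          exact ⟨w, hw1, Set.mem_insert_of_mem v hw2⟩
      · rw [Set.ncard_insert_of_notMem hPsE' E'.toFinite,
          Set.ncard_insert_of_notMem hvW' W'.toFinite, hcard']
    · push_neg at hex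
      refine ⟨∅, ∅, by simp, by simp, by simp, by simp, ?_, by simp⟩
      intro s hsC hsS
      exact absurd hsS (hex s hsC)

/-- Weak duality: an independent edge set is at most as large as any vertex cover. -/
lemma indep_le_cover {V : Type*} [Fintype V] {C E : Set (Set V)} {W : Set V}
    (hE : IsIndepEdgeSet C E) (hW : IsVertexCover C W) : E.ncard ≤ W.ncard := by
  classical
  rcases E.eq_empty_or_nonempty with rfl | ⟨e0, he0⟩
  · simp
  obtain ⟨w0, -⟩ := hW e0 (hE.1 he0)
  haveI : Nonempty V := ⟨w0⟩
  set f : Set V → V := fun e => if h : (e ∩ W).Nonempty then h.choose else Classical.arbitrary V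
    with hf
  have hfmem : ∀ e ∈ E, f e ∈ e ∩ W := by
    intro e he
    have h : (e ∩ W).Nonempty := hW e (hE.1 he)
    simpa [hf, h] using h.choose_spec
  have hinj : Set.InjOn f E := by
    intro e1 he1 e2 he2 hfe
    by_contra hne
    have hdisj := hE.2 he1 he2 hne
    exact Set.disjoint_left.mp hdisj (hfmem e1 he1).1 (hfe ▸ (hfmem e2 he2).1)
  calc E.ncard = (f '' E).ncard := (Set.ncard_image_of_injOn hinj).symm
    _ ≤ W.ncard := Set.ncard_le_ncard (fun w ⟨e, he, hw⟩ => hw ▸ (hfmem e he).2) W.toFinite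

end PathKonig

/-- For any tree `T` and any positive integer `ℓ`, the clutter of paths of length
`ℓ` of `T` satisfies the König property: the maximum number of vertex-disjoint
paths of length `ℓ` equals the minimum number of vertices needed to meet every
path of length `ℓ`. -/
theorem path_clutter_konig {V : Type*} [Fintype V]
    (T : SimpleGraph V) (hT : T.IsTree) (ℓ : ℕ) (hℓ : 1 ≤ ℓ) :
    ∃ (E : Set (Set V)) (W : Set V),
      IsIndepEdgeSet (pathClutter T ℓ) E ∧ IsVertexCover (pathClutter T ℓ) W ∧
      E.ncard = W.ncard ∧
      (∀ E', IsIndepEdgeSet (pathClutter T ℓ) E' → E'.ncard ≤ E.ncard) ∧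
      (∀ W', IsVertexCover (pathClutter T ℓ) W' → W.ncard ≤ W'.ncard) := by
  obtain ⟨r⟩ := hT.isConnected.nonempty
  obtain ⟨E, W, hEC, -, hEpw, -, hcov, hcard⟩ :=
    PathKonig.konig_aux hT r ℓ (Set.univ : Set V).ncard Set.univ le_rfl
      (fun _ _ _ _ => Set.mem_univ _)
  have hWcov : IsVertexCover (pathClutter T ℓ) W :=
    fun s hs => hcov s hs (Set.subset_univ _)
  have hEind : IsIndepEdgeSet (pathClutter T ℓ) E := ⟨hEC, hEpw⟩
  refine ⟨E, W, hEind, hWcov, hcard, ?_, ?_⟩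
  · intro E' hE'
    calc E'.ncard ≤ W.ncard := PathKonig.indep_le_cover hE' hWcov
      _ = E.ncard := hcard.symm
  · intro W' hW'
    calc W.ncard = E.ncard := hcard.symm
      _ ≤ W'.ncard := PathKonig.indep_le_cover hEind hW'
end

section
/- Let T be a tree on vertex set V that is a suspension of length ℓ, with perfect matching paths p_1, ..., p_g, where p_i has ordered vertices x_i, y_{i,1}, ..., y_{i,ℓ}, each y_{i,k} for 1 ≤ k ≤ ℓ-1 has degree 2, and y_{i,ℓ} has degree 1. Then {x_1, ..., x_g} is a minimum vertex cover of the clutter of paths of length ℓ of T, and the p_i form a perfect matching of König type. -/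
/-- Auxiliary walk along a path of vertices given by `f`. -/
def mkSuspWalk {V : Type*} (T : SimpleGraph V) (ℓ : ℕ) (f : Fin (ℓ + 1) → V)
    (hadj : ∀ (j : ℕ) (hj : j + 1 ≤ ℓ), T.Adj (f ⟨j, by omega⟩) (f ⟨j + 1, by omega⟩)) :
    (k j : ℕ) → (h : j + k = ℓ) → T.Walk (f ⟨j, by omega⟩) (f ⟨ℓ, by omega⟩)
  | 0, j, h => SimpleGraph.Walk.nil.copy (congrArg f (Fin.ext (by simp; omega))) rfl
  | (k+1), j, h =>
    SimpleGraph.Walk.cons (hadj j (by omega)) (mkSuspWalk T ℓ f hadj k (j+1) (by omega))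

theorem mkSuspWalk_length {V : Type*} (T : SimpleGraph V) (ℓ : ℕ) (f : Fin (ℓ + 1) → V)
    (hadj : ∀ (j : ℕ) (hj : j + 1 ≤ ℓ), T.Adj (f ⟨j, by omega⟩) (f ⟨j + 1, by omega⟩)) :
    ∀ (k j : ℕ) (h : j + k = ℓ), (mkSuspWalk T ℓ f hadj k j h).length = k := by
  intro k
  induction k with
  | zero => intro j h; simp [mkSuspWalk]
  | succ k ih => intro j h; simp [mkSuspWalk, ih]

theorem mkSuspWalk_support {V : Type*} (T : SimpleGraph V) (ℓ : ℕ) (f : Fin (ℓ + 1) → V)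
    (hadj : ∀ (j : ℕ) (hj : j + 1 ≤ ℓ), T.Adj (f ⟨j, by omega⟩) (f ⟨j + 1, by omega⟩)) :
    ∀ (k j : ℕ) (h : j + k = ℓ) (v : V),
      v ∈ (mkSuspWalk T ℓ f hadj k j h).support ↔
        ∃ (t : ℕ) (ht : t ≤ ℓ), j ≤ t ∧ v = f ⟨t, by omega⟩ := by
  intro k
  induction k with
  | zero =>
    intro j h v
    simp only [mkSuspWalk, SimpleGraph.Walk.support_copy, SimpleGraph.Walk.support_nil,
      List.mem_singleton]
    constructor
    · rintro rfl; exact ⟨ℓ, le_rfl, by omega, rfl⟩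
    · rintro ⟨t, ht, hjt, rfl⟩
      exact congrArg f (Fin.ext (by simp; omega))
  | succ k ih =>
    intro j h v
    simp only [mkSuspWalk, SimpleGraph.Walk.support_cons, List.mem_cons, ih]
    constructor
    · rintro (rfl | ⟨t, ht, hjt, rfl⟩)
      · exact ⟨j, by omega, le_rfl, rfl⟩
      · exact ⟨t, ht, by omega, rfl⟩
    · rintro ⟨t, ht, hjt, rfl⟩
      rcases Nat.eq_or_lt_of_le hjt with rfl | hlt
      · exact Or.inl rfl
      · exact Or.inr ⟨t, ht, by omega, rfl⟩

theorem mkSuspWalk_nodup {V : Type*} (T : SimpleGraph V) (ℓ : ℕ) (f : Fin (ℓ + 1) → V)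
    (hadj : ∀ (j : ℕ) (hj : j + 1 ≤ ℓ), T.Adj (f ⟨j, by omega⟩) (f ⟨j + 1, by omega⟩))
    (hf : Function.Injective f) :
    ∀ (k j : ℕ) (h : j + k = ℓ), (mkSuspWalk T ℓ f hadj k j h).support.Nodup := by
  intro k
  induction k with
  | zero => intro j h; simp [mkSuspWalk]
  | succ k ih =>
    intro j h
    simp only [mkSuspWalk, SimpleGraph.Walk.support_cons, List.nodup_cons]
    refine ⟨?_, ih _ _⟩
    rw [mkSuspWalk_support]
    rintro ⟨t, ht, hjt, hft⟩
    have := hf hft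
    have : j = t := congrArg Fin.val this
    omega

theorem susp_adj_struct {V : Type*} [Fintype V] [DecidableEq V]
    (T : SimpleGraph V) [DecidableRel T.Adj]
    (ℓ : ℕ) (hℓ : 1 ≤ ℓ) (g : ℕ) (w : Fin g → Fin (ℓ + 1) → V)
    (hinj : Function.Injective (fun q : Fin g × Fin (ℓ + 1) => w q.1 q.2))
    (hadj : ∀ (i : Fin g) (j : Fin (ℓ + 1)) (hj : (j : ℕ) + 1 ≤ ℓ),
      T.Adj (w i j) (w i ⟨(j : ℕ) + 1, Nat.lt_succ_of_le hj⟩))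
    (hdeg2 : ∀ (i : Fin g) (j : Fin (ℓ + 1)), 1 ≤ (j : ℕ) → (j : ℕ) ≤ ℓ - 1 →
      T.degree (w i j) = 2)
    (hdeg1 : ∀ i : Fin g, T.degree (w i (Fin.last ℓ)) = 1)
    (i : Fin g) (j : ℕ) (h1 : 1 ≤ j) (hle : j ≤ ℓ) (v : V)
    (hv : T.Adj (w i ⟨j, by omega⟩) v) :
    v = w i ⟨j - 1, by omega⟩ ∨ ∃ h2 : j + 1 ≤ ℓ, v = w i ⟨j + 1, by omega⟩ := by
  have hvmem : v ∈ T.neighborFinset (w i ⟨j, by omega⟩) := by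
    rw [SimpleGraph.mem_neighborFinset]; exact hv
  have ha : T.Adj (w i ⟨j, by omega⟩) (w i ⟨j - 1, by omega⟩) := by
    have := hadj i ⟨j - 1, by omega⟩ (by simp; omega)
    have e : (⟨(j:ℕ) - 1 + 1, by omega⟩ : Fin (ℓ+1)) = ⟨j, by omega⟩ := Fin.ext (by simp; omega)
    rw [e] at this
    exact this.symm
  by_cases hcase : j = ℓ
  · subst hcase
    have hdeg : T.degree (w i ⟨j, by omega⟩) = 1 := by
      have : Fin.last j = (⟨j, by omega⟩ : Fin (j+1)) := rfl
      rw [← this]; exact hdeg1 i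
    left
    have hcard : (T.neighborFinset (w i ⟨j, by omega⟩)).card = 1 := by
      rw [← SimpleGraph.card_neighborFinset_eq_degree] at hdeg; exact hdeg
    have hsub : {w i ⟨j - 1, by omega⟩} ⊆ T.neighborFinset (w i ⟨j, by omega⟩) := by
      simp only [Finset.singleton_subset_iff, SimpleGraph.mem_neighborFinset]
      exact ha
    have := Finset.eq_of_subset_of_card_le hsub (by rw [hcard]; simp)
    rw [← this] at hvmem
    simpa using hvmem
  · have hj1 : j + 1 ≤ ℓ := by omega
    have hb : T.Adj (w i ⟨j, by omega⟩) (w i ⟨j + 1, by omega⟩) := hadj i ⟨j, by omega⟩ (by simpa)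
    have hdeg : T.degree (w i ⟨j, by omega⟩) = 2 := hdeg2 i ⟨j, by omega⟩ (by simpa) (by simp; omega)
    have hcard : (T.neighborFinset (w i ⟨j, by omega⟩)).card = 2 := by
      rw [← SimpleGraph.card_neighborFinset_eq_degree] at hdeg; exact hdeg
    have hne : w i ⟨j - 1, by omega⟩ ≠ w i ⟨j + 1, by omega⟩ := by
      intro h
      have h2 := hinj (a₁ := (i, ⟨j - 1, by omega⟩)) (a₂ := (i, ⟨j + 1, by omega⟩)) h
      have h3 : j - 1 = j + 1 := congrArg (fun q : Fin g × Fin (ℓ+1) => (q.2 : ℕ)) h2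
      omega
    have hsub : {w i ⟨j - 1, by omega⟩, w i ⟨j + 1, by omega⟩} ⊆
        T.neighborFinset (w i ⟨j, by omega⟩) := by
      intro x hx
      simp only [Finset.mem_insert, Finset.mem_singleton] at hx
      rcases hx with rfl | rfl <;> rw [SimpleGraph.mem_neighborFinset]
      · exact ha
      · exact hb
    have := Finset.eq_of_subset_of_card_le hsub
      (by rw [hcard, Finset.card_insert_of_notMem (by simpa using hne), Finset.card_singleton])
    rw [← this] at hvmem
    simp only [Finset.mem_insert, Finset.mem_singleton] at hvmem
    rcases hvmem with rfl | rfl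
    · exact Or.inl rfl
    · exact Or.inr ⟨hj1, rfl⟩

theorem susp_tail_closed {V : Type*} [Fintype V] [DecidableEq V]
    (T : SimpleGraph V) [DecidableRel T.Adj]
    (ℓ : ℕ) (hℓ : 1 ≤ ℓ) (g : ℕ) (w : Fin g → Fin (ℓ + 1) → V)
    (hinj : Function.Injective (fun q : Fin g × Fin (ℓ + 1) => w q.1 q.2))
    (hadj : ∀ (i : Fin g) (j : Fin (ℓ + 1)) (hj : (j : ℕ) + 1 ≤ ℓ),
      T.Adj (w i j) (w i ⟨(j : ℕ) + 1, Nat.lt_succ_of_le hj⟩))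
    (hdeg2 : ∀ (i : Fin g) (j : Fin (ℓ + 1)), 1 ≤ (j : ℕ) → (j : ℕ) ≤ ℓ - 1 →
      T.degree (w i j) = 2)
    (hdeg1 : ∀ i : Fin g, T.degree (w i (Fin.last ℓ)) = 1) :
    ∀ (x y : V) (p : T.Walk x y), (∀ v ∈ p.support, ∀ i : Fin g, v ≠ w i 0) →
      ∀ (i : Fin g) (j : ℕ), 1 ≤ j → (hle : j ≤ ℓ) → x = w i ⟨j, by omega⟩ →
      ∀ v ∈ p.support, ∃ (j' : ℕ) (hj' : j' ≤ ℓ), 1 ≤ j' ∧ v = w i ⟨j', by omega⟩ := by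
  have adjs := susp_adj_struct T ℓ hℓ g w hinj hadj hdeg2 hdeg1
  intro x y p
  induction p with
  | nil =>
    intro hx i j h1 hle hxw v hv
    simp only [SimpleGraph.Walk.support_nil, List.mem_singleton] at hv
    subst hv
    exact ⟨j, hle, h1, hxw⟩
  | @cons a b c h q ih =>
    intro hx i j h1 hle hxw v hv
    simp only [SimpleGraph.Walk.support_cons, List.mem_cons] at hv
    rcases hv with rfl | hv
    · exact ⟨j, hle, h1, hxw⟩
    · subst hxw
      have hb := adjs i j h1 hle b h
      have hxq : ∀ u ∈ q.support, ∀ i : Fin g, u ≠ w i 0 := by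
        intro u hu
        exact hx u (by simp [hu])
      rcases hb with hb1 | ⟨h2, hb2⟩
      · rcases Nat.eq_or_lt_of_le h1 with h1e | h1lt
        · exfalso
          apply hx b (by simp) i
          rw [hb1]
          congr 1
          apply Fin.ext
          simp; omega
        · exact ih hxq i (j - 1) (by omega) (by omega) hb1 v hv
      · exact ih hxq i (j + 1) (by omega) h2 hb2 v hv

/-- Let `T` be a tree which is a suspension of length `ℓ`, with perfect matching
paths `p_1, …, p_g`, where `p_i` has ordered vertices
`w i 0 = x_i, w i 1 = y_{i,1}, …, w i ℓ = y_{i,ℓ}`, the interior vertices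
`y_{i,k}` (`1 ≤ k ≤ ℓ-1`) have degree `2` and the ends `y_{i,ℓ}` have degree `1`.
Then `{x_1, …, x_g}` is a minimum vertex cover of the clutter of paths of length
`ℓ` of `T`, and the paths `p_i` form a perfect matching of König type. -/
theorem suspension_min_cover_and_konig_matching {V : Type*} [Fintype V]
    [DecidableEq V] (T : SimpleGraph V) [DecidableRel T.Adj] (hT : T.IsTree)
    (ℓ : ℕ) (hℓ : 1 ≤ ℓ) (g : ℕ) (w : Fin g → Fin (ℓ + 1) → V)
    (hinj : Function.Injective (fun q : Fin g × Fin (ℓ + 1) => w q.1 q.2))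
    (hsurj : ∀ v : V, ∃ i j, w i j = v)
    (hadj : ∀ (i : Fin g) (j : Fin (ℓ + 1)) (hj : (j : ℕ) + 1 ≤ ℓ),
      T.Adj (w i j) (w i ⟨(j : ℕ) + 1, by omega⟩))
    (hdeg2 : ∀ (i : Fin g) (j : Fin (ℓ + 1)), 1 ≤ (j : ℕ) → (j : ℕ) ≤ ℓ - 1 →
      T.degree (w i j) = 2)
    (hdeg1 : ∀ i : Fin g, T.degree (w i (Fin.last ℓ)) = 1) :
    IsVertexCover (pathClutter T ℓ) (Set.range fun i => w i 0) ∧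
    (∀ W, IsVertexCover (pathClutter T ℓ) W →
      (Set.range fun i => w i 0).ncard ≤ W.ncard) ∧
    (∀ i, Set.range (w i) ∈ pathClutter T ℓ) ∧
    (Set.range fun i => w i 0).ncard = g := by
  -- injectivity facts
  have hwinj : ∀ i : Fin g, Function.Injective (w i) := by
    intro i a b hab
    exact congrArg Prod.snd (hinj (a₁ := (i, a)) (a₂ := (i, b)) hab)
  have hx0 : Function.Injective (fun i : Fin g => w i 0) := by
    intro a b hab
    exact congrArg Prod.fst (hinj (a₁ := (a, 0)) (a₂ := (b, 0)) hab)
  -- the p_i are members of the path clutter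
  have hpaths : ∀ i, Set.range (w i) ∈ pathClutter T ℓ := by
    intro i
    have hadj' : ∀ (j : ℕ) (hj : j + 1 ≤ ℓ),
        T.Adj (w i ⟨j, by omega⟩) (w i ⟨j + 1, by omega⟩) := by
      intro j hj
      exact hadj i ⟨j, by omega⟩ hj
    refine ⟨w i ⟨0, by omega⟩, w i ⟨ℓ, by omega⟩,
      mkSuspWalk T ℓ (w i) hadj' ℓ 0 (by omega), ?_, ?_, ?_⟩
    · rw [SimpleGraph.Walk.isPath_def]
      exact mkSuspWalk_nodup T ℓ (w i) hadj' (hwinj i) ℓ 0 (by omega)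
    · exact mkSuspWalk_length T ℓ (w i) hadj' ℓ 0 (by omega)
    · ext v
      rw [Set.mem_setOf_eq, mkSuspWalk_support]
      constructor
      · rintro ⟨j, rfl⟩
        exact ⟨(j : ℕ), by omega, by omega, by rw [Fin.eta]⟩
      · rintro ⟨t, ht, _, rfl⟩
        exact ⟨⟨t, by omega⟩, rfl⟩
  -- cardinality of the set of x_i
  have hcard : (Set.range fun i => w i 0).ncard = g := by
    rw [← Nat.card_coe_set_eq, Nat.card_range_of_injective hx0, Nat.card_eq_fintype_card,
      Fintype.card_fin]
  refine ⟨?_, ?_, hpaths, hcard⟩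
  · -- the x_i form a vertex cover
    rintro s ⟨x, y, p, hp, hlen, rfl⟩
    by_contra hcon
    have hx : ∀ v ∈ p.support, ∀ i : Fin g, v ≠ w i 0 := by
      intro v hv i hvi
      exact hcon ⟨v, hv, ⟨i, hvi.symm⟩⟩
    obtain ⟨i, j, hij⟩ := hsurj x
    have hj1 : 1 ≤ (j : ℕ) := by
      by_contra hj0
      apply hx x p.start_mem_support i
      rw [← hij]
      congr 1
      apply Fin.ext
      rw [Fin.val_zero]; omega
    have key := susp_tail_closed T ℓ hℓ g w hinj hadj hdeg2 hdeg1 x y p hx i (j : ℕ)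
      hj1 (by omega) (hij.symm.trans (congrArg (w i) (Fin.ext rfl)))
    have hsub : p.support.toFinset ⊆
        (Finset.univ.erase (0 : Fin (ℓ + 1))).image (w i) := by
      intro v hv
      rw [List.mem_toFinset] at hv
      obtain ⟨j', hj', h1, rfl⟩ := key v hv
      refine Finset.mem_image.mpr ⟨⟨j', by omega⟩, Finset.mem_erase.mpr ⟨?_, Finset.mem_univ _⟩, rfl⟩
      intro h0
      have : j' = 0 := congrArg Fin.val h0
      omega
    have hcard1 : p.support.toFinset.card = ℓ + 1 := by
      rw [List.toFinset_card_of_nodup hp.support_nodup, SimpleGraph.Walk.length_support, hlen]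
    have hcard2 : ((Finset.univ.erase (0 : Fin (ℓ + 1))).image (w i)).card ≤ ℓ := by
      calc ((Finset.univ.erase (0 : Fin (ℓ + 1))).image (w i)).card
          ≤ (Finset.univ.erase (0 : Fin (ℓ + 1))).card := Finset.card_image_le
        _ = ℓ := by rw [Finset.card_erase_of_mem (Finset.mem_univ _)]; simp
    have := Finset.card_le_card hsub
    omega
  · -- minimality of the cover
    intro W hW
    have hpick : ∀ i : Fin g, ∃ v, v ∈ Set.range (w i) ∧ v ∈ W := by
      intro i
      obtain ⟨v, hv⟩ := hW _ (hpaths i)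
      exact ⟨v, hv.1, hv.2⟩
    choose f hf1 hf2 using hpick
    have hfinj : Function.Injective f := by
      intro a b hab
      obtain ⟨ja, hja⟩ := hf1 a
      obtain ⟨jb, hjb⟩ := hf1 b
      have : w a ja = w b jb := by rw [hja, hjb, hab]
      exact congrArg Prod.fst (hinj (a₁ := (a, ja)) (a₂ := (b, jb)) this)
    rw [hcard]
    have hrange : Set.range f ⊆ W := by rintro v ⟨i, rfl⟩; exact hf2 i
    calc g = (Set.range f).ncard := by
          rw [← Nat.card_coe_set_eq, Nat.card_range_of_injective hfinj,
            Nat.card_eq_fintype_card, Fintype.card_fin]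
      _ ≤ W.ncard := Set.ncard_le_ncard hrange W.toFinite
end

section
/- Let T be a tree and ℓ a positive integer. If the path ideal I_ℓ(T) (generated by all paths of length ℓ of T) is unmixed (all minimal vertex covers of the clutter of paths of length ℓ have the same cardinality) and every vertex of T lies on some path of length ℓ, then T admits a perfect matching by paths of length ℓ: there exist pairwise vertex-disjoint paths of length ℓ whose vertex sets partition V(T). -/
set_option linter.unusedSectionVars false
set_option linter.unusedVariables false

/-- A minimal vertex cover. -/
def IsMinimalVertexCover {V : Type*} (C : Set (Set V)) (W : Set V) : Prop :=
  IsVertexCover C W ∧ ∀ W' ⊆ W, IsVertexCover C W' → W' = W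

open SimpleGraph Walk

noncomputable section
open Classical

variable {V : Type*} {T : SimpleGraph V}

/-- The unique path between two vertices of a tree. -/
noncomputable def tp (hT : T.IsTree) (u v : V) : T.Walk u v :=
  (hT.existsUnique_path u v).exists.choose

lemma tp_isPath (hT : T.IsTree) (u v : V) : (tp hT u v).IsPath :=
  (hT.existsUnique_path u v).exists.choose_spec

lemma tp_eq (hT : T.IsTree) {u v : V} {p : T.Walk u v} (hp : p.IsPath) : p = tp hT u v :=
  (hT.existsUnique_path u v).unique hp (tp_isPath hT u v)

variable [DecidableEq V]

lemma takeUntil_tp (hT : T.IsTree) {r x u : V} (h : u ∈ (tp hT r x).support) :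
    (tp hT r x).takeUntil u h = tp hT r u :=
  tp_eq hT ((tp_isPath hT r x).takeUntil h)

lemma dropUntil_tp (hT : T.IsTree) {r x u : V} (h : u ∈ (tp hT r x).support) :
    (tp hT r x).dropUntil u h = tp hT u x :=
  tp_eq hT ((tp_isPath hT r x).dropUntil h)

lemma append_isPath {a b c : V} {p : T.Walk a b} {q : T.Walk b c}
    (hp : p.IsPath) (hq : q.IsPath) (hint : ∀ y ∈ p.support, y ∈ q.support → y = b) :
    (p.append q).IsPath := by
  rw [isPath_def, support_append]
  rw [isPath_def] at hp hq
  refine List.Nodup.append hp ?_ ?_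
  · have := q.support_eq_cons
    rw [this, List.nodup_cons] at hq
    exact hq.2
  · intro y hy hy'
    have hyq : y ∈ q.support := by rw [q.support_eq_cons]; exact List.mem_cons_of_mem _ hy'
    have : y = b := hint y hy hyq
    subst this
    rw [q.support_eq_cons, List.nodup_cons] at hq
    exact hq.1 hy'

lemma mem_take_mem_drop {a b u y : V} {p : T.Walk a b} (hp : p.IsPath) (h : u ∈ p.support)
    (h1 : y ∈ (p.takeUntil u h).support) (h2 : y ∈ (p.dropUntil u h).support) : y = u := by
  have hnd : ((p.takeUntil u h).support ++ (p.dropUntil u h).support.tail).Nodup := by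
    rw [← support_append, take_spec]
    exact hp.support_nodup
  rw [(p.dropUntil u h).support_eq_cons, List.mem_cons] at h2
  rcases h2 with rfl | h2
  · rfl
  · exact absurd h2 (List.disjoint_of_nodup_append hnd h1)

set_option linter.unusedSectionVars false

/-- `u` is an ancestor of `x` in the tree rooted at `r`. -/
def Anc (hT : T.IsTree) (r u x : V) : Prop := u ∈ (tp hT r x).support

/-- depth of a vertex -/
def dep (hT : T.IsTree) (r x : V) : ℕ := (tp hT r x).length

variable {hT : T.IsTree} {r : V}

lemma anc_self (x : V) : Anc hT r x x := end_mem_support _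

lemma anc_root (x : V) : Anc hT r r x := start_mem_support _

lemma dep_add {u x : V} (h : Anc hT r u x) :
    ∃ k, dep hT r x = dep hT r u + k ∧ (k = 0 → u = x) := by
  refine ⟨((tp hT r x).dropUntil u h).length, ?_, ?_⟩
  · have hs := congr_arg Walk.length (take_spec (tp hT r x) h)
    rw [length_append, takeUntil_tp hT h] at hs
    exact hs.symm
  · intro hk
    exact eq_of_length_eq_zero hk

lemma dep_le {u x : V} (h : Anc hT r u x) : dep hT r u ≤ dep hT r x := by
  obtain ⟨k, hk, -⟩ := dep_add h; omega

lemma anc_eq_of_dep_le {u x : V} (h : Anc hT r u x) (hd : dep hT r x ≤ dep hT r u) : u = x := by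
  obtain ⟨k, hk, h0⟩ := dep_add h
  exact h0 (by omega)

lemma anc_antisymm {u x : V} (h : Anc hT r u x) (h' : Anc hT r x u) : u = x :=
  anc_eq_of_dep_le h (dep_le h')

lemma support_tp_subset_of_anc {u x : V} (h : Anc hT r u x) :
    (tp hT u x).support ⊆ (tp hT r x).support := by
  rw [← dropUntil_tp hT h]
  exact support_dropUntil_subset _ h

lemma support_tp_subset_of_anc' {u x : V} (h : Anc hT r u x) :
    (tp hT r u).support ⊆ (tp hT r x).support := by
  rw [← takeUntil_tp hT h]
  exact support_takeUntil_subset _ h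

lemma anc_trans {t u x : V} (h1 : Anc hT r t u) (h2 : Anc hT r u x) : Anc hT r t x :=
  support_tp_subset_of_anc' h2 h1

lemma anc_of_mem_tp {v x y : V} (h : Anc hT r v x) (hy : y ∈ (tp hT v x).support) :
    Anc hT r v y := by
  have hq : ((tp hT v x).takeUntil y hy).IsPath := (tp_isPath hT v x).takeUntil hy
  have hw : ((tp hT r v).append ((tp hT v x).takeUntil y hy)).IsPath := by
    refine append_isPath (tp_isPath hT r v) hq ?_
    intro z hz hz'
    have hz2 : z ∈ ((tp hT r x).dropUntil v h).support := by
      rw [dropUntil_tp hT h]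
      exact support_takeUntil_subset _ hy hz'
    have hz1 : z ∈ ((tp hT r x).takeUntil v h).support := by
      rw [takeUntil_tp hT h]; exact hz
    exact mem_take_mem_drop (tp_isPath hT r x) h hz1 hz2
  have : (tp hT r v).append ((tp hT v x).takeUntil y hy) = tp hT r y := tp_eq hT hw
  unfold Anc
  rw [← this, mem_support_append_iff]
  exact Or.inl (end_mem_support _)

lemma anc_total {u v x : V} (h1 : Anc hT r u x) (h2 : Anc hT r v x) :
    Anc hT r u v ∨ Anc hT r v u := by
  have := h1
  unfold Anc at this
  rw [← take_spec (tp hT r x) h2, mem_support_append_iff] at this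
  rcases this with h | h
  · left; rw [takeUntil_tp hT h2] at h; exact h
  · right
    rw [dropUntil_tp hT h2] at h
    exact anc_of_mem_tp h2 h

lemma anc_mem_tp {u v x : V} (h1 : Anc hT r u v) (h2 : Anc hT r v x) :
    v ∈ (tp hT u x).support := by
  have hw : ((tp hT u v).append (tp hT v x)).IsPath := by
    refine append_isPath (tp_isPath hT u v) (tp_isPath hT v x) ?_
    intro y hy hy'
    have hyv : Anc hT r y v := by
      have : y ∈ (tp hT r v).support := by
        rw [← take_spec (tp hT r v) h1, mem_support_append_iff]
        right; rw [dropUntil_tp hT h1]; exact hy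
      exact this
    exact anc_antisymm hyv (anc_of_mem_tp h2 hy')
  have : (tp hT u v).append (tp hT v x) = tp hT u x := tp_eq hT hw
  rw [← this, mem_support_append_iff]
  exact Or.inl (end_mem_support _)

lemma tp_support_subset {a b u x : V} {p : T.Walk a b} (hp : p.IsPath)
    (hu : u ∈ p.support) (hx : x ∈ p.support) : (tp hT u x).support ⊆ p.support := by
  have hx' := hx
  rw [← take_spec p hu, mem_support_append_iff] at hx'
  rcases hx' with h | h
  · -- x comes before u : use reverse of dropUntil of takeUntil
    have hq : (((p.takeUntil u hu).dropUntil x h).reverse).IsPath :=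
      ((hp.takeUntil hu).dropUntil h).reverse
    have he : ((p.takeUntil u hu).dropUntil x h).reverse = tp hT u x := tp_eq hT hq
    intro z hz
    rw [← he, support_reverse, List.mem_reverse] at hz
    exact support_takeUntil_subset p hu (support_dropUntil_subset _ h hz)
  · have hq : ((p.dropUntil u hu).takeUntil x h).IsPath := (hp.dropUntil hu).takeUntil h
    have he : (p.dropUntil u hu).takeUntil x h = tp hT u x := tp_eq hT hq
    intro z hz
    rw [← he] at hz
    exact support_dropUntil_subset p hu (support_takeUntil_subset _ h hz)

lemma exists_top {a b : V} {p : T.Walk a b} (hp : p.IsPath) :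
    ∃ u ∈ p.support, ∀ z ∈ p.support, Anc hT r u z := by
  classical
  have hne : p.support.toFinset.Nonempty := ⟨a, by simp⟩
  obtain ⟨u, hu, hmin⟩ := p.support.toFinset.exists_min_image (dep hT r) hne
  rw [List.mem_toFinset] at hu
  refine ⟨u, hu, ?_⟩
  intro z hz
  have hw : ((tp hT r u).append (tp hT u z)).IsPath := by
    refine append_isPath (tp_isPath hT r u) (tp_isPath hT u z) ?_
    intro y hy hy'
    have h1 : Anc hT r y u := hy
    have h2 : y ∈ p.support := tp_support_subset hp hu hz hy'
    have := hmin y (by rwa [List.mem_toFinset])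
    exact anc_eq_of_dep_le h1 this
  have : (tp hT r u).append (tp hT u z) = tp hT r z := tp_eq hT hw
  unfold Anc
  rw [← this, mem_support_append_iff]
  exact Or.inl (end_mem_support _)

variable {ℓ : ℕ}

lemma pathClutter_nonempty {S : Set V} (h : S ∈ pathClutter T ℓ) : S.Nonempty := by
  obtain ⟨x, y, p, hp, hl, rfl⟩ := h
  exact ⟨x, p.start_mem_support⟩

lemma pathClutter_ncard {S : Set V} (h : S ∈ pathClutter T ℓ) : S.ncard = ℓ + 1 := by
  obtain ⟨x, y, p, hp, hl, rfl⟩ := h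
  classical
  have : {v | v ∈ p.support} = (p.support.toFinset : Set V) := by
    ext z; simp
  rw [this, Set.ncard_coe_finset, List.toFinset_card_of_nodup hp.support_nodup,
    length_support, hl]

lemma pathClutter_exists_top {S : Set V} (h : S ∈ pathClutter T ℓ) :
    ∃ u ∈ S, ∀ z ∈ S, Anc hT r u z := by
  obtain ⟨x, y, p, hp, hl, rfl⟩ := h
  obtain ⟨u, hu, htop⟩ := exists_top (hT := hT) (r := r) hp
  exact ⟨u, hu, htop⟩

lemma pathClutter_convex {S : Set V} (h : S ∈ pathClutter T ℓ) {u x : V}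
    (hu : u ∈ S) (hx : x ∈ S) : ∀ z ∈ (tp hT u x).support, z ∈ S := by
  obtain ⟨a, b, p, hp, hl, rfl⟩ := h
  exact fun z hz => tp_support_subset hp hu hx hz

variable [Fintype V]

lemma koenig (hT : T.IsTree) (r : V) (ℓ : ℕ) : ∀ (n : ℕ) (U : Set V), U.ncard ≤ n →
    ∃ (M : Finset (Set V)) (W : Finset V),
      (↑M ⊆ {S | S ∈ pathClutter T ℓ ∧ S ⊆ U}) ∧
      ((M : Set (Set V)).Pairwise Disjoint) ∧
      (∀ S ∈ pathClutter T ℓ, S ⊆ U → ∃ w ∈ W, w ∈ S) ∧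
      W.card ≤ M.card := by
  intro n
  induction n with
  | zero =>
    intro U hU
    refine ⟨∅, ∅, by simp, by simp, ?_, by simp⟩
    intro S hS hSU
    exfalso
    have : U = ∅ := by
      rw [← Set.ncard_eq_zero (Set.toFinite U)]; omega
    obtain ⟨z, hz⟩ := pathClutter_nonempty hS
    exact absurd (hSU hz) (by simp [this])
  | succ n ih =>
    intro U hU
    by_cases hex : ∃ S ∈ pathClutter T ℓ, S ⊆ U
    · -- pick the deepest top
      set Tops : Set V :=
        {v | ∃ S, S ∈ pathClutter T ℓ ∧ S ⊆ U ∧ v ∈ S ∧ ∀ z ∈ S, Anc hT r v z} with hTops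
      have hTopsne : Tops.Nonempty := by
        obtain ⟨S, hS, hSU⟩ := hex
        obtain ⟨u, hu, htop⟩ := pathClutter_exists_top (hT := hT) (r := r) hS
        exact ⟨u, S, hS, hSU, hu, htop⟩
      obtain ⟨v, hvTops, hvmax⟩ := Set.exists_max_image Tops (dep hT r) (Set.toFinite _) hTopsne
      obtain ⟨S0, hS0, hS0U, hvS0, hS0anc⟩ := hvTops
      -- key claim
      have key : ∀ S ∈ pathClutter T ℓ, S ⊆ U → (∃ x ∈ S, Anc hT r v x) → v ∈ S := by
        intro S hS hSU ⟨x, hxS, hvx⟩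
        obtain ⟨u, huS, hutop⟩ := pathClutter_exists_top (hT := hT) (r := r) hS
        have hudep : dep hT r u ≤ dep hT r v :=
          hvmax u ⟨S, hS, hSU, huS, hutop⟩
        rcases anc_total (hutop x hxS) hvx with h | h
        · have := anc_mem_tp h hvx
          exact pathClutter_convex hS huS hxS v this
        · have : v = u := anc_eq_of_dep_le h hudep
          exact this ▸ huS
      -- remove the subtree of v
      set U' : Set V := U \ {x | Anc hT r v x} with hU'
      have hvU : v ∈ U := hS0U hvS0
      have hvU' : v ∉ U' := by simp [hU', anc_self]
      have hU'card : U'.ncard ≤ n := by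
        have h1 : U' ⊆ U \ {v} := by
          intro z hz
          refine ⟨hz.1, ?_⟩
          intro hzv
          exact hz.2 (by simp at hzv; simp [hzv, anc_self])
        have h2 : U'.ncard ≤ (U \ {v}).ncard := Set.ncard_le_ncard h1 (Set.toFinite _)
        have h3 : (U \ {v}).ncard + 1 = U.ncard :=
          Set.ncard_diff_singleton_add_one hvU (Set.toFinite _)
        omega
      obtain ⟨M', W', hM'sub, hM'dis, hW'cov, hcard⟩ := ih U' hU'card
      have hS0notM' : S0 ∉ M' := by
        intro hmem
        exact hvU' ((hM'sub hmem).2 hvS0)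
      refine ⟨insert S0 M', insert v W', ?_, ?_, ?_, ?_⟩
      · intro S hS
        rw [Finset.coe_insert, Set.mem_insert_iff] at hS
        rcases hS with rfl | hS
        · exact ⟨hS0, hS0U⟩
        · obtain ⟨h1, h2⟩ := hM'sub hS
          exact ⟨h1, h2.trans Set.diff_subset⟩
      · rw [Finset.coe_insert]
        have hdisj : ∀ S ∈ (M' : Set (Set V)), Disjoint S0 S := by
          intro S hS
          rw [Set.disjoint_left]
          intro a haS0 haS
          exact ((hM'sub hS).2 haS).2 (hS0anc a haS0)
        refine Set.pairwise_insert_of_symm |>.mpr ⟨hM'dis, ?_⟩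
        intro S hS _
        exact hdisj S hS
      · intro S hS hSU
        by_cases hmeet : ∃ x ∈ S, Anc hT r v x
        · exact ⟨v, Finset.mem_insert_self _ _, key S hS hSU hmeet⟩
        · push_neg at hmeet
          have : S ⊆ U' := fun z hz => ⟨hSU hz, hmeet z hz⟩
          obtain ⟨w, hw, hwS⟩ := hW'cov S hS this
          exact ⟨w, Finset.mem_insert_of_mem hw, hwS⟩
      · rw [Finset.card_insert_of_notMem hS0notM']
        calc (insert v W').card ≤ W'.card + 1 := Finset.card_insert_le _ _
          _ ≤ M'.card + 1 := by omega
    · push_neg at hex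
      refine ⟨∅, ∅, by simp, by simp, ?_, by simp⟩
      intro S hS hSU
      exact absurd hSU (hex S hS)

lemma card_le_ncard_of_disjoint_meets {M : Finset (Set V)}
    (hd : (M : Set (Set V)).Pairwise Disjoint) {Y : Set V}
    (h : ∀ S ∈ M, (S ∩ Y).Nonempty) : M.card ≤ Y.ncard := by
  classical
  rcases M.eq_empty_or_nonempty with rfl | ⟨S₀, hS₀⟩
  · simp
  have hV : Nonempty V := ⟨(h S₀ hS₀).choose⟩
  set g : Set V → V := fun S =>
    if h' : (S ∩ Y).Nonempty then h'.choose else Classical.arbitrary V with hg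
  have hgmem : ∀ S ∈ M, g S ∈ S ∩ Y := by
    intro S hS
    simp only [hg, dif_pos (h S hS)]
    exact (h S hS).choose_spec
  have hYfin : Y.Finite := Set.toFinite Y
  rw [Set.ncard_eq_toFinset_card Y hYfin]
  refine Finset.card_le_card_of_injOn g ?_ ?_
  · intro S hS
    rw [Finset.mem_coe, Set.Finite.mem_toFinset]
    exact (hgmem S hS).2
  · intro S hS S' hS' heq
    by_contra hne
    have hdis := hd hS hS' hne
    exact Set.disjoint_left.mp hdis (hgmem S hS).1 (heq ▸ (hgmem S' hS').1)

theorem unmixed_path_ideal_perfect_matching' 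
    (hT : T.IsTree) (hℓ : 1 ≤ ℓ)
    (hunmixed : ∀ W W', IsMinimalVertexCover (pathClutter T ℓ) W →
      IsMinimalVertexCover (pathClutter T ℓ) W' → W.ncard = W'.ncard)
    (hcover : ∀ v : V, ∃ s ∈ pathClutter T ℓ, v ∈ s) :
    ∃ P : Set (Set V), P ⊆ pathClutter T ℓ ∧ P.Pairwise Disjoint ∧
      ⋃₀ P = Set.univ := by
  classical
  cases isEmpty_or_nonempty V with
  | inl h =>
    refine ⟨∅, by simp, by simp, ?_⟩
    rw [Set.sUnion_empty]
    exact (Set.univ_eq_empty_iff.mpr h).symm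
  | inr h =>
    obtain ⟨r⟩ := h
    obtain ⟨M, W, hMsub, hMdis, hWcov, hWM⟩ :=
      koenig hT r ℓ ((Set.univ : Set V).ncard) Set.univ le_rfl
    have hMC : (M : Set (Set V)) ⊆ pathClutter T ℓ := fun S hS => (hMsub hS).1
    have hWVC : IsVertexCover (pathClutter T ℓ) ↑W := by
      intro s hs
      obtain ⟨w, hwW, hws⟩ := hWcov s hs (Set.subset_univ _)
      exact ⟨w, hws, hwW⟩
    obtain ⟨W1, hW1mem, hW1min⟩ := Set.Finite.exists_minimalFor id
      {W' : Set V | W' ⊆ ↑W ∧ IsVertexCover (pathClutter T ℓ) W'} (Set.toFinite _)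
      ⟨↑W, subset_rfl, hWVC⟩
    have hW1MVC : IsMinimalVertexCover (pathClutter T ℓ) W1 := by
      refine ⟨hW1mem.2, ?_⟩
      intro W'' hsub hcov'
      exact le_antisymm hsub (hW1min ⟨hsub.trans hW1mem.1, hcov'⟩ hsub)
    have hW1card : W1.ncard = M.card := by
      have hle : W1.ncard ≤ M.card := by
        have h1 := Set.ncard_le_ncard hW1mem.1 (Set.toFinite _)
        rw [Set.ncard_coe_finset] at h1
        omega
      have hge : M.card ≤ W1.ncard := card_le_ncard_of_disjoint_meets hMdis
        (fun S hS => hW1mem.2 S (hMC hS))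
      omega
    have hXuniv : ⋃₀ (M : Set (Set V)) = Set.univ := by
      rw [Set.eq_univ_iff_forall]
      by_contra hcon
      push_neg at hcon
      obtain ⟨v, hv⟩ := hcon
      set X := ⋃₀ (M : Set (Set V)) with hX
      obtain ⟨s, hs, hvs⟩ := hcover v
      set Ind : Set V → Prop := fun A => ∀ e ∈ pathClutter T ℓ, ¬ e ⊆ A with hInd
      have hB0 : Ind (s \ {v}) := by
        intro e he hesub
        have h1 : e ⊆ s := hesub.trans Set.diff_subset
        have h2 : e = s := Set.eq_of_subset_of_ncard_le h1
          (by rw [pathClutter_ncard hs, pathClutter_ncard he]) (Set.toFinite _)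
        rw [h2] at hesub
        exact (hesub hvs).2 rfl
      obtain ⟨A, hAmem, hAmax⟩ := Set.Finite.exists_maximalFor id
        {A : Set V | s \ {v} ⊆ A ∧ Ind A} (Set.toFinite _) ⟨s \ {v}, subset_rfl, hB0⟩
      have hvA : v ∉ A := by
        intro hvA
        refine hAmem.2 s hs ?_
        intro z hz
        by_cases hzv : z = v
        · rwa [hzv]
        · exact hAmem.1 ⟨hz, hzv⟩
      have hAcomp : IsMinimalVertexCover (pathClutter T ℓ) Aᶜ := by
        constructor
        · intro e he
          rcases Set.not_subset.mp (hAmem.2 e he) with ⟨z, hz1, hz2⟩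
          exact ⟨z, hz1, hz2⟩
        · intro W'' hsub hcov''
          have hAsub : A ⊆ W''ᶜ := by
            intro z hz hzW
            exact (hsub hzW) hz
          have hmemfam : W''ᶜ ∈ {A : Set V | s \ {v} ⊆ A ∧ Ind A} := by
            refine ⟨(hAmem.1).trans hAsub, ?_⟩
            intro e he hesub
            obtain ⟨z, hz1, hz2⟩ := hcov'' e he
            exact (hesub hz1) hz2
          have hEq : A = W''ᶜ := le_antisymm hAsub (hAmax hmemfam hAsub)
          rw [hEq, compl_compl]
      have hAcard : Aᶜ.ncard = M.card := by
        rw [hunmixed Aᶜ W1 hAcomp hW1MVC, hW1card]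
      -- counting
      have hd1 : Disjoint (A ∩ X) (A ∩ Xᶜ) :=
        Set.disjoint_left.mpr fun z hz hz' => hz'.2 hz.2
      have hf1 : (A ∩ X).ncard + (A ∩ Xᶜ).ncard = A.ncard := by
        rw [← Set.ncard_union_eq hd1 (Set.toFinite _) (Set.toFinite _),
          Set.inter_union_compl]
      have hf2 : A.ncard + Aᶜ.ncard = Nat.card V :=
        Set.ncard_add_ncard_compl A (Set.toFinite _) (Set.toFinite _)
      have hf3 : X.ncard + Xᶜ.ncard = Nat.card V :=
        Set.ncard_add_ncard_compl X (Set.toFinite _) (Set.toFinite _)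
      have hd2 : Disjoint (X ∩ A) (X \ A) :=
        Set.disjoint_left.mpr fun z hz hz' => hz'.2 hz.2
      have hf4 : (X ∩ A).ncard + (X \ A).ncard = X.ncard := by
        rw [← Set.ncard_union_eq hd2 (Set.toFinite _) (Set.toFinite _),
          Set.inter_union_diff]
      have hf4' : (X ∩ A).ncard = (A ∩ X).ncard := by rw [Set.inter_comm]
      have hf5 : M.card ≤ (X \ A).ncard := by
        refine card_le_ncard_of_disjoint_meets hMdis ?_
        intro S hS
        rcases Set.not_subset.mp (hAmem.2 S (hMC hS)) with ⟨z, hz1, hz2⟩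
        exact ⟨z, hz1, ⟨S, hS, hz1⟩, hz2⟩
      have hvXc : v ∈ Xᶜ := hv
      have hf6 : (A ∩ Xᶜ).ncard + 1 ≤ Xᶜ.ncard := by
        have hsub : A ∩ Xᶜ ⊆ Xᶜ \ {v} := by
          intro z hz
          exact ⟨hz.2, fun hzv => hvA (Set.mem_singleton_iff.mp hzv ▸ hz.1)⟩
        have h1 := Set.ncard_le_ncard hsub (Set.toFinite _)
        have h2 := Set.ncard_diff_singleton_add_one hvXc (Set.toFinite _)
        omega
      omega
    exact ⟨↑M, hMC, hMdis, hXuniv⟩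

end

/-- Let `T` be a tree and `ℓ ≥ 1`.  If the clutter of paths of length `ℓ` of `T`
is unmixed (all minimal vertex covers have the same cardinality) and every
vertex of `T` lies on some path of length `ℓ`, then `T` admits a perfect
matching by paths of length `ℓ`: there exist pairwise vertex-disjoint paths of
length `ℓ` whose vertex sets partition `V(T)`. -/
theorem unmixed_path_ideal_perfect_matching {V : Type*} [Fintype V]
    (T : SimpleGraph V) (hT : T.IsTree) (ℓ : ℕ) (hℓ : 1 ≤ ℓ)
    (hunmixed : ∀ W W', IsMinimalVertexCover (pathClutter T ℓ) W →
      IsMinimalVertexCover (pathClutter T ℓ) W' → W.ncard = W'.ncard)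
    (hcover : ∀ v : V, ∃ s ∈ pathClutter T ℓ, v ∈ s) :
    ∃ P : Set (Set V), P ⊆ pathClutter T ℓ ∧ P.Pairwise Disjoint ∧
      ⋃₀ P = Set.univ := by
  classical
  exact unmixed_path_ideal_perfect_matching' hT hℓ hunmixed hcover
end

section
/- The edge ideal of a simplicial tree satisfies the König property: the maximum number of pairwise disjoint facets equals the minimum size of a vertex cover of the facets. -/
set_option linter.unusedSectionVars false
set_option maxHeartbeats 1000000

/-- `F` is a leaf of the collection of facets `Γ`. -/
def IsLeafOf {V : Type*} [DecidableEq V] (Γ : Set (Finset V)) (F : Finset V) :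
    Prop :=
  F ∈ Γ ∧ (Γ = {F} ∨ ∃ G ∈ Γ, G ≠ F ∧ ∀ H ∈ Γ, H ≠ F → F ∩ H ⊆ F ∩ G)

/-- The 1-skeleton of the simplicial complex with facet set `Facets`. -/
def oneSkeleton {V : Type*} (Facets : Set (Finset V)) : SimpleGraph V :=
  SimpleGraph.fromRel fun u v => ∃ F ∈ Facets, u ∈ F ∧ v ∈ F

/-- A simplicial tree, described by its set of facets. -/
def IsSimplicialTree {V : Type*} [DecidableEq V] (Facets : Set (Finset V)) :
    Prop :=
  (∀ F ∈ Facets, F.Nonempty) ∧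
  (∀ F ∈ Facets, ∀ G ∈ Facets, F ⊆ G → F = G) ∧
  (oneSkeleton Facets).Connected ∧
  ∀ Γ ⊆ Facets, Γ.Nonempty → ∃ F, IsLeafOf Γ F

section Aux

variable {V : Type*} [Fintype V] [DecidableEq V]

private lemma no_common {A B : Finset V} (h : A ∩ B = ∅) {x : V} (ha : x ∈ A) (hb : x ∈ B) :
    False := by
  have hx : x ∈ A ∩ B := Finset.mem_inter.mpr ⟨ha, hb⟩
  rw [h] at hx
  exact Finset.notMem_empty x hx

private lemma inter_wit {A B : Finset V} (h : (A ∩ B).Nonempty) : ∃ x, x ∈ A ∧ x ∈ B := by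
  obtain ⟨x, hx⟩ := h; exact ⟨x, Finset.mem_inter.mp hx⟩

private lemma nonempty_comm {A B : Finset V} (h : (A ∩ B).Nonempty) : (B ∩ A).Nonempty := by
  rwa [Finset.inter_comm]

/-- Helly property of forests: pairwise intersecting facets share a common vertex. -/
lemma forest_helly : ∀ (n : ℕ) (Γ : Set (Finset V)), Γ.ncard ≤ n →
    (∀ F ∈ Γ, F.Nonempty) →
    (∀ Δ ⊆ Γ, Δ.Nonempty → ∃ F, IsLeafOf Δ F) →
    (∀ A ∈ Γ, ∀ B ∈ Γ, (A ∩ B).Nonempty) → Γ.Nonempty → ∃ v : V, ∀ F ∈ Γ, v ∈ F := by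
  intro n
  induction n with
  | zero =>
    intro Γ hn _ _ _ hne
    exfalso
    have := (Set.ncard_pos (Set.toFinite Γ)).mpr hne
    omega
  | succ n ih =>
    intro Γ hn hne hl hpair hΓne
    obtain ⟨L, hLmem, hLrest⟩ := hl Γ (subset_refl _) hΓne
    rcases hLrest with hsing | ⟨G, hGmem, hGne, hkey⟩
    · obtain ⟨v, hv⟩ := hne L hLmem
      exact ⟨v, fun F hF => by rw [hsing] at hF; simp at hF; rwa [hF]⟩
    · by_cases hthird : ∃ H ∈ Γ, H ≠ L ∧ H ≠ G
      · obtain ⟨H, hH, hHL, hHG⟩ := hthird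
        have hssub : Γ \ {G} ⊂ Γ := by
          constructor
          · exact Set.diff_subset
          · intro hsup
            have := hsup hGmem
            simp at this
        have hcard : (Γ \ {G}).ncard ≤ n := by
          have := Set.ncard_lt_ncard hssub (Set.toFinite Γ)
          omega
        have hsub : Γ \ {G} ⊆ Γ := Set.diff_subset
        obtain ⟨w, hw⟩ := ih (Γ \ {G}) hcard (fun F hF => hne F (hsub hF))
          (fun Δ hΔ => hl Δ (hΔ.trans hsub))
          (fun A hA B hB => hpair A (hsub hA) B (hsub hB))
          ⟨L, hLmem, by simp [Ne.symm hGne]⟩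
        by_cases hwG : w ∈ G
        · refine ⟨w, fun F hF => ?_⟩
          by_cases hFG : F = G
          · rwa [hFG]
          · exact hw F ⟨hF, by simp [hFG]⟩
        · exfalso
          have hwL : w ∈ L := hw L ⟨hLmem, by simp [Ne.symm hGne]⟩
          have hwH : w ∈ H := hw H ⟨hH, by simp [hHG]⟩
          have : w ∈ L ∩ G := hkey H hH hHL (Finset.mem_inter.mpr ⟨hwL, hwH⟩)
          exact hwG (Finset.mem_inter.mp this).2
      · push_neg at hthird
        obtain ⟨x, hxL, hxG⟩ := inter_wit (hpair L hLmem G hGmem)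
        refine ⟨x, fun F hF => ?_⟩
        by_cases hFL : F = L
        · rwa [hFL]
        · rw [hthird F hF hFL]; exact hxG

/-- A forest contains no induced-cycle configuration. -/
lemma forest_no_cycle : ∀ (m : ℕ) (Γ : Set (Finset V)) (p : ℕ → Finset V) (H K₁ K₂ : Finset V),
    (∀ Δ ⊆ Γ, Δ.Nonempty → ∃ F, IsLeafOf Δ F) →
    (∀ i, i ≤ m → p i ∈ Γ) → (∀ i, i < m → (p i ∩ p (i+1)).Nonempty) →
    H ∈ Γ → K₁ ∈ Γ → K₂ ∈ Γ →
    (∀ i, i ≤ m → H ∩ p i = ∅) → (H ∩ K₁).Nonempty → (H ∩ K₂).Nonempty →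
    K₁ ∩ K₂ = ∅ → (K₁ ∩ p 0).Nonempty → (K₂ ∩ p m).Nonempty → False := by
  intro m
  induction m using Nat.strong_induction_on with
  | _ m ih =>
  intro Γ p H K₁ K₂ hl hp hcons hH hK₁ hK₂ hHp hHK₁ hHK₂ hKK hK₁p hK₂p
  -- Reduction 1 : K₁ meets some later p i
  by_cases h1 : ∃ i, 1 ≤ i ∧ i ≤ m ∧ (K₁ ∩ p i).Nonempty
  · obtain ⟨i, hi1, him, hKi⟩ := h1
    exact ih (m - i) (by omega) Γ (fun k => p (i + k)) H K₁ K₂ hl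
      (fun j hj => hp _ (by omega)) (fun j hj => hcons (i + j) (by omega))
      hH hK₁ hK₂ (fun j hj => hHp _ (by omega)) hHK₁ hHK₂ hKK hKi
      (by show (K₂ ∩ p (i + (m - i))).Nonempty
          rw [show i + (m - i) = m by omega]; exact hK₂p)
  have hK1e : ∀ i, 1 ≤ i → i ≤ m → K₁ ∩ p i = ∅ := by
    intro i hi1 him
    by_contra hne'
    exact h1 ⟨i, hi1, him, Finset.nonempty_iff_ne_empty.mpr hne'⟩
  -- Reduction 2 : K₂ meets some earlier p i
  by_cases h2 : ∃ i, i < m ∧ (K₂ ∩ p i).Nonempty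
  · obtain ⟨i, him, hKi⟩ := h2
    exact ih i him Γ p H K₁ K₂ hl (fun j hj => hp _ (by omega))
      (fun j hj => hcons _ (by omega)) hH hK₁ hK₂ (fun j hj => hHp _ (by omega))
      hHK₁ hHK₂ hKK hK₁p hKi
  have hK2e : ∀ i, i < m → K₂ ∩ p i = ∅ := by
    intro i him
    by_contra hne'
    exact h2 ⟨i, him, Finset.nonempty_iff_ne_empty.mpr hne'⟩
  -- Reduction 3 : shortcut chords
  by_cases h3 : ∃ i j, i + 2 ≤ j ∧ j ≤ m ∧ (p i ∩ p j).Nonempty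
  · obtain ⟨i, j, hij, hjm, hpij⟩ := h3
    set d := j - i - 1 with hd
    have hd1 : 1 ≤ d := by omega
    have hjd : j = i + 1 + d := by omega
    refine ih (m - d) (by omega) Γ (fun k => if k ≤ i then p k else p (k + d)) H K₁ K₂ hl
      ?_ ?_ hH hK₁ hK₂ ?_ hHK₁ hHK₂ hKK ?_ ?_
    · intro k hk
      by_cases h : k ≤ i
      · simp only [h, if_pos]; exact hp k (by omega)
      · simp only [h, if_neg, if_false]; exact hp _ (by omega)
    · intro k hk
      rcases lt_trichotomy k i with h | h | h
      · have h2' : k + 1 ≤ i := h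
        simp only [le_of_lt h, if_pos, h2']
        exact hcons k (by omega)
      · subst h
        simp only [le_refl, if_pos, show ¬(k + 1 ≤ k) by omega, if_neg, if_false]
        rw [show k + 1 + d = j by omega]
        exact hpij
      · simp only [show ¬(k ≤ i) by omega, show ¬(k + 1 ≤ i) by omega, if_neg, if_false]
        rw [show k + 1 + d = k + d + 1 by omega]
        exact hcons (k + d) (by omega)
    · intro k hk
      by_cases h : k ≤ i
      · simp only [h, if_pos]; exact hHp k (by omega)
      · simp only [h, if_neg, if_false]; exact hHp _ (by omega)
    · simp only [Nat.zero_le, if_pos]; exact hK₁p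
    · have hmd : ¬(m - d ≤ i) := by omega
      simp only [hmd, if_neg, if_false]
      rw [show m - d + d = m by omega]
      exact hK₂p
  have hp3e : ∀ i j, i + 2 ≤ j → j ≤ m → p i ∩ p j = ∅ := by
    intro i j hij hjm
    by_contra hne'
    exact h3 ⟨i, j, hij, hjm, Finset.nonempty_iff_ne_empty.mpr hne'⟩
  -- basic distinctness
  have dHK₁ : H ≠ K₁ := by
    intro h
    obtain ⟨x, hx1, hx2⟩ := inter_wit hHK₂
    rw [h] at hx1
    exact no_common hKK hx1 hx2
  have dHK₂ : H ≠ K₂ := by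
    intro h
    obtain ⟨x, hx1, hx2⟩ := inter_wit hHK₁
    rw [h] at hx1
    exact no_common hKK hx2 hx1
  have dK₁p0 : K₁ ≠ p 0 := by
    intro h
    obtain ⟨x, hx1, hx2⟩ := inter_wit hHK₁
    rw [h] at hx2
    exact no_common (hHp 0 (by omega)) hx1 hx2
  have dK₂pm : K₂ ≠ p m := by
    intro h
    obtain ⟨x, hx1, hx2⟩ := inter_wit hHK₂
    rw [h] at hx2
    exact no_common (hHp m le_rfl) hx1 hx2
  have dR : ∀ i, i < m → p i ≠ p (i + 1) := by
    intro i him he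
    by_cases h : i + 1 = m
    · obtain ⟨x, hx1, hx2⟩ := inter_wit hK₂p
      rw [← h, ← he] at hx2
      exact no_common (hK2e i him) hx1 hx2
    · obtain ⟨x, hx1, hx2⟩ := inter_wit (hcons (i + 1) (by omega))
      rw [← he] at hx1
      exact no_common (hp3e i (i + 2) (by omega) (by omega)) hx1 hx2
  -- the cycle family
  set Δ : Set (Finset V) := {H, K₁, K₂} ∪ p '' (Set.Iic m) with hΔdef
  have hHΔ : H ∈ Δ := by simp [hΔdef]
  have hK₁Δ : K₁ ∈ Δ := by simp [hΔdef]
  have hK₂Δ : K₂ ∈ Δ := by simp [hΔdef]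
  have hpΔ : ∀ k, k ≤ m → p k ∈ Δ := by
    intro k hk
    rw [hΔdef]
    exact Set.mem_union_right _ ⟨k, hk, rfl⟩
  have hΔsub : Δ ⊆ Γ := by
    intro X hX
    rw [hΔdef] at hX
    rcases hX with hX | ⟨k, hk, rfl⟩
    · rcases hX with rfl | rfl | rfl
      · exact hH
      · exact hK₁
      · exact hK₂
    · exact hp k hk
  obtain ⟨F₀, hF₀mem, hF₀rest⟩ := hl Δ hΔsub ⟨H, hHΔ⟩
  rcases hF₀rest with hsing | ⟨G₀, hG₀mem, hG₀ne, hkey⟩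
  · rw [hsing] at hHΔ hK₁Δ
    simp at hHΔ hK₁Δ
    exact dHK₁ (hHΔ.trans hK₁Δ.symm)
  have hF₀cases : F₀ = H ∨ F₀ = K₁ ∨ F₀ = K₂ ∨ ∃ k, k ≤ m ∧ p k = F₀ := by
    rw [hΔdef] at hF₀mem
    rcases hF₀mem with hX | ⟨k, hk, hpk⟩
    · rcases hX with rfl | rfl | rfl
      · exact Or.inl rfl
      · exact Or.inr (Or.inl rfl)
      · exact Or.inr (Or.inr (Or.inl rfl))
    · exact Or.inr (Or.inr (Or.inr ⟨k, hk, hpk⟩))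
  have hG₀cases : G₀ = H ∨ G₀ = K₁ ∨ G₀ = K₂ ∨ ∃ k, k ≤ m ∧ p k = G₀ := by
    rw [hΔdef] at hG₀mem
    rcases hG₀mem with hX | ⟨k, hk, hpk⟩
    · rcases hX with rfl | rfl | rfl
      · exact Or.inl rfl
      · exact Or.inr (Or.inl rfl)
      · exact Or.inr (Or.inr (Or.inl rfl))
    · exact Or.inr (Or.inr (Or.inr ⟨k, hk, hpk⟩))
  rcases hF₀cases with heq | heq | heq | ⟨i, him, heq⟩
  · -- F₀ = H
    rw [heq] at hkey hG₀ne
    have hkH₁ : H ∩ K₁ ⊆ H ∩ G₀ := hkey K₁ hK₁Δ (Ne.symm dHK₁)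
    have hkH₂ : H ∩ K₂ ⊆ H ∩ G₀ := hkey K₂ hK₂Δ (Ne.symm dHK₂)
    rcases hG₀cases with hg | hg | hg | ⟨k, hk, hg⟩
    · exact hG₀ne hg
    · rw [hg] at hkH₂
      obtain ⟨x, hx⟩ := hHK₂
      obtain ⟨hx1, hx2⟩ := Finset.mem_inter.mp (hkH₂ hx)
      exact no_common hKK hx2 (Finset.mem_inter.mp hx).2
    · rw [hg] at hkH₁
      obtain ⟨x, hx⟩ := hHK₁
      obtain ⟨hx1, hx2⟩ := Finset.mem_inter.mp (hkH₁ hx)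
      exact no_common hKK (Finset.mem_inter.mp hx).2 hx2
    · rw [← hg] at hkH₁
      obtain ⟨x, hx⟩ := hHK₁
      obtain ⟨hx1, hx2⟩ := Finset.mem_inter.mp (hkH₁ hx)
      exact no_common (hHp k hk) hx1 hx2
  · -- F₀ = K₁
    rw [heq] at hkey hG₀ne
    have hkH : K₁ ∩ H ⊆ K₁ ∩ G₀ := hkey H hHΔ dHK₁
    have hkp0 : K₁ ∩ p 0 ⊆ K₁ ∩ G₀ := hkey (p 0) (hpΔ 0 (by omega)) (Ne.symm dK₁p0)
    obtain ⟨y, hy1, hy2⟩ := inter_wit hHK₁  -- y ∈ H, y ∈ K₁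
    obtain ⟨z, hz1, hz2⟩ := inter_wit hK₁p  -- z ∈ K₁, z ∈ p 0
    rcases hG₀cases with hg | hg | hg | ⟨k, hk, hg⟩
    · rw [hg] at hkp0
      have := Finset.mem_inter.mp (hkp0 (Finset.mem_inter.mpr ⟨hz1, hz2⟩))
      exact no_common (hHp 0 (by omega)) this.2 hz2
    · exact hG₀ne hg
    · rw [hg] at hkH
      have := Finset.mem_inter.mp (hkH (Finset.mem_inter.mpr ⟨hy2, hy1⟩))
      exact no_common hKK this.1 this.2
    · by_cases hk0 : k = 0
      · rw [← hg, hk0] at hkH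
        have := Finset.mem_inter.mp (hkH (Finset.mem_inter.mpr ⟨hy2, hy1⟩))
        exact no_common (hHp 0 (by omega)) hy1 this.2
      · rw [← hg] at hkp0
        have := Finset.mem_inter.mp (hkp0 (Finset.mem_inter.mpr ⟨hz1, hz2⟩))
        exact no_common (hK1e k (by omega) hk) this.1 this.2
  · -- F₀ = K₂
    rw [heq] at hkey hG₀ne
    have hkH : K₂ ∩ H ⊆ K₂ ∩ G₀ := hkey H hHΔ dHK₂
    have hkpm : K₂ ∩ p m ⊆ K₂ ∩ G₀ := hkey (p m) (hpΔ m le_rfl) (Ne.symm dK₂pm)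
    obtain ⟨y, hy1, hy2⟩ := inter_wit hHK₂  -- y ∈ H, y ∈ K₂
    obtain ⟨z, hz1, hz2⟩ := inter_wit hK₂p  -- z ∈ K₂, z ∈ p m
    rcases hG₀cases with hg | hg | hg | ⟨k, hk, hg⟩
    · rw [hg] at hkpm
      have := Finset.mem_inter.mp (hkpm (Finset.mem_inter.mpr ⟨hz1, hz2⟩))
      exact no_common (hHp m le_rfl) this.2 hz2
    · rw [hg] at hkH
      have := Finset.mem_inter.mp (hkH (Finset.mem_inter.mpr ⟨hy2, hy1⟩))
      exact no_common hKK this.2 this.1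
    · exact hG₀ne hg
    · by_cases hkm : k = m
      · rw [← hg, hkm] at hkH
        have := Finset.mem_inter.mp (hkH (Finset.mem_inter.mpr ⟨hy2, hy1⟩))
        exact no_common (hHp m le_rfl) hy1 this.2
      · rw [← hg] at hkpm
        have := Finset.mem_inter.mp (hkpm (Finset.mem_inter.mpr ⟨hz1, hz2⟩))
        exact no_common (hK2e k (by omega)) this.1 this.2
  · -- F₀ = p i
    subst heq
    rcases Nat.eq_zero_or_pos i with rfl | hipos
    · -- i = 0
      have hkL : p 0 ∩ K₁ ⊆ p 0 ∩ G₀ := hkey K₁ hK₁Δ dK₁p0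
      obtain ⟨z, hz1, hz2⟩ := inter_wit hK₁p  -- z ∈ K₁, z ∈ p 0
      rcases hG₀cases with hg | hg | hg | ⟨k, hk, hg⟩
      · rw [hg] at hkL
        have := Finset.mem_inter.mp (hkL (Finset.mem_inter.mpr ⟨hz2, hz1⟩))
        exact no_common (hHp 0 (by omega)) this.2 hz2
      · -- G₀ = K₁ : use the right neighbour
        by_cases hm0 : m = 0
        · subst hm0
          have hkR : p 0 ∩ K₂ ⊆ p 0 ∩ G₀ := hkey K₂ hK₂Δ dK₂pm
          rw [hg] at hkR
          obtain ⟨w, hw1, hw2⟩ := inter_wit hK₂p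
          have := Finset.mem_inter.mp (hkR (Finset.mem_inter.mpr ⟨hw2, hw1⟩))
          exact no_common hKK this.2 hw1
        · have hne01 : p 1 ≠ p 0 := Ne.symm (dR 0 (by omega))
          have hkR : p 0 ∩ p 1 ⊆ p 0 ∩ G₀ := hkey (p 1) (hpΔ 1 (by omega)) hne01
          rw [hg] at hkR
          obtain ⟨w, hw⟩ := hcons 0 (by omega)
          have hw' := Finset.mem_inter.mp hw
          have := Finset.mem_inter.mp (hkR hw)
          exact no_common (hK1e 1 le_rfl (by omega)) this.2 hw'.2
      · rw [hg] at hkL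
        have := Finset.mem_inter.mp (hkL (Finset.mem_inter.mpr ⟨hz2, hz1⟩))
        exact no_common hKK hz1 this.2
      · by_cases hk0 : k = 0
        · rw [hk0] at hg
          exact hG₀ne hg.symm
        · by_cases hk1 : k = 1
          · rw [← hg, hk1] at hkL
            have := Finset.mem_inter.mp (hkL (Finset.mem_inter.mpr ⟨hz2, hz1⟩))
            exact no_common (hK1e 1 le_rfl (by omega)) hz1 this.2
          · rw [← hg] at hkL
            have := Finset.mem_inter.mp (hkL (Finset.mem_inter.mpr ⟨hz2, hz1⟩))
            exact no_common (hp3e 0 k (by omega) hk) this.1 this.2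
    · -- i ≥ 1 : write i = j + 1
      obtain ⟨j, rfl⟩ : ∃ j, i = j + 1 := ⟨i - 1, by omega⟩
      have hjm : j < m := by omega
      have hL : (p (j+1) ∩ p j).Nonempty := by
        obtain ⟨x, hx1, hx2⟩ := inter_wit (hcons j hjm)
        exact ⟨x, Finset.mem_inter.mpr ⟨hx2, hx1⟩⟩
      have hkL : p (j+1) ∩ p j ⊆ p (j+1) ∩ G₀ := hkey (p j) (hpΔ j (by omega)) (dR j hjm)
      obtain ⟨z, hz1, hz2⟩ := inter_wit hL  -- z ∈ p (j+1), z ∈ p j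
      rcases hG₀cases with hg | hg | hg | ⟨k, hk, hg⟩
      · rw [hg] at hkL
        have := Finset.mem_inter.mp (hkL (Finset.mem_inter.mpr ⟨hz1, hz2⟩))
        exact no_common (hHp (j+1) him) this.2 hz1
      · rw [hg] at hkL
        have := Finset.mem_inter.mp (hkL (Finset.mem_inter.mpr ⟨hz1, hz2⟩))
        exact no_common (hK1e (j+1) (by omega) him) this.2 hz1
      · rw [hg] at hkL
        have := Finset.mem_inter.mp (hkL (Finset.mem_inter.mpr ⟨hz1, hz2⟩))
        exact no_common (hK2e j hjm) this.2 hz2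
      · rcases lt_trichotomy k (j+1) with hlt | heqk | hgt
        · -- k ≤ j : use the right neighbour
          by_cases hm : j + 1 = m
          · have hK₂ne : K₂ ≠ p (j+1) := by rw [hm]; exact dK₂pm
            have hkR : p (j+1) ∩ K₂ ⊆ p (j+1) ∩ G₀ := hkey K₂ hK₂Δ hK₂ne
            rw [← hg] at hkR
            obtain ⟨w, hw1, hw2⟩ := inter_wit hK₂p
            rw [← hm] at hw2
            have := Finset.mem_inter.mp (hkR (Finset.mem_inter.mpr ⟨hw2, hw1⟩))
            exact no_common (hK2e k (by omega)) hw1 this.2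
          · have hkR : p (j+1) ∩ p (j+2) ⊆ p (j+1) ∩ G₀ :=
              hkey (p (j+2)) (hpΔ (j+2) (by omega)) (Ne.symm (dR (j+1) (by omega)))
            rw [← hg] at hkR
            obtain ⟨w, hw1, hw2⟩ := inter_wit (hcons (j+1) (by omega))
            have := Finset.mem_inter.mp (hkR (Finset.mem_inter.mpr ⟨hw1, hw2⟩))
            exact no_common (hp3e k (j+2) (by omega) (by omega)) this.2 hw2
        · rw [heqk] at hg
          exact hG₀ne hg.symm
        · by_cases hk2 : k = j + 2
          · rw [← hg, hk2] at hkL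
            have := Finset.mem_inter.mp (hkL (Finset.mem_inter.mpr ⟨hz1, hz2⟩))
            exact no_common (hp3e j (j+2) le_rfl (by omega)) hz2 this.2
          · rw [← hg] at hkL
            have := Finset.mem_inter.mp (hkL (Finset.mem_inter.mpr ⟨hz1, hz2⟩))
            exact no_common (hp3e (j+1) k (by omega) hk) this.1 this.2

/-- Connectivity of a family of facets via explicit walks. -/
def FamConn (C : Set (Finset V)) : Prop :=
  ∀ A ∈ C, ∀ B ∈ C, ∃ (m : ℕ) (p : ℕ → Finset V), p 0 = A ∧ p m = B ∧
    (∀ i, i ≤ m → p i ∈ C) ∧ ∀ i, i < m → (p i ∩ p (i+1)).Nonempty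

lemma famConn_empty : FamConn (∅ : Set (Finset V)) := by
  intro A hA; simp at hA

lemma famConn_singleton (R : Finset V) : FamConn ({R} : Set (Finset V)) := by
  intro A hA B hB
  simp at hA hB
  exact ⟨0, fun _ => A, rfl, by rw [hA, hB], fun i _ => by simpa [hA], fun i h => by omega⟩

lemma famConn_insert {C : Set (Finset V)} (K : Finset V)
    (hK : ∃ K₀ ∈ C, (K ∩ K₀).Nonempty) (hC : FamConn C) : FamConn (insert K C) := by
  obtain ⟨K₀, hK₀, hKK₀⟩ := hK
  intro A hA B hB
  rcases Set.mem_insert_iff.mp hA with hAK | hA' <;>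
    rcases Set.mem_insert_iff.mp hB with hBK | hB'
  · exact ⟨0, fun _ => A, rfl, by rw [hAK, hBK], fun i _ => hA, fun i h => by omega⟩
  · -- A = K, B ∈ C
    obtain ⟨m, p, hp0, hpm, hpmem, hpcons⟩ := hC K₀ hK₀ B hB'
    refine ⟨m + 1, fun k => if k = 0 then A else p (k - 1), by simp, by simp [hpm], ?_, ?_⟩
    · intro i hi
      by_cases h : i = 0
      · simpa [h] using hA
      · simp only [h, if_neg, if_false]
        exact Set.mem_insert_iff.mpr (Or.inr (hpmem (i - 1) (by omega)))
    · intro i hi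
      by_cases h : i = 0
      · subst h
        simp only [if_pos, show (0:ℕ)+1 ≠ 0 by omega, if_neg, if_false]
        rw [hp0, hAK]
        exact hKK₀
      · simp only [h, if_neg, show i+1 ≠ 0 by omega, if_false]
        rw [show i + 1 - 1 = i from by omega]
        have := hpcons (i - 1) (by omega)
        rwa [show i - 1 + 1 = i from by omega] at this
  · -- A ∈ C, B = K
    obtain ⟨m, p, hp0, hpm, hpmem, hpcons⟩ := hC A hA' K₀ hK₀
    refine ⟨m + 1, fun k => if k ≤ m then p k else B, by simp [hp0], by simp, ?_, ?_⟩
    · intro i hi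
      by_cases h : i ≤ m
      · simp only [h, if_pos]
        exact Set.mem_insert_iff.mpr (Or.inr (hpmem i h))
      · simpa [h] using hB
    · intro i hi
      by_cases h : i < m
      · simp only [show i ≤ m from by omega, show i + 1 ≤ m from by omega, if_pos]
        exact hpcons i h
      · have hi' : i = m := by omega
        subst hi'
        simp only [le_refl, if_pos, show ¬(i + 1 ≤ i) from by omega, if_neg, if_false]
        rw [hpm, hBK, Finset.inter_comm]
        exact hKK₀
  · obtain ⟨m, p, hp0, hpm, hpmem, hpcons⟩ := hC A hA' B hB'
    exact ⟨m, p, hp0, hpm, fun i hi => Set.mem_insert_iff.mpr (Or.inr (hpmem i hi)), hpcons⟩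


/-- Main structural lemma: a forest has a facet `F`, avoiding a prescribed connected
subfamily, all of whose neighbours share a common vertex. -/
lemma strong_avoid : ∀ (n : ℕ) (Γ C : Set (Finset V)),
    Γ.ncard + (Γ \ C).ncard ≤ n →
    (∀ F ∈ Γ, F.Nonempty) →
    (∀ Δ ⊆ Γ, Δ.Nonempty → ∃ F, IsLeafOf Δ F) →
    C ⊆ Γ → FamConn C →
    (∃ H ∈ Γ, ∀ K ∈ C, H ∩ K = ∅) →
    ∃ F ∈ Γ, (∀ K ∈ C, F ∩ K = ∅) ∧ ∃ v ∈ F, ∀ H ∈ Γ, (F ∩ H).Nonempty → v ∈ H := by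
  intro n
  induction n using Nat.strong_induction_on with
  | _ n ih =>
  intro Γ C hn hne hl hCsub hconn hex
  obtain ⟨H₀, hH₀Γ, hH₀av⟩ := hex
  have hfin : Γ.Finite := Set.toFinite Γ
  have hH₀C : H₀ ∉ C := by
    intro hmem
    obtain ⟨x, hx⟩ := hne H₀ hH₀Γ
    exact no_common (hH₀av H₀ hmem) hx hx
  have hne' : ∀ F ∈ Γ \ C, F.Nonempty := fun F hF => hne F hF.1
  have hl' : ∀ Δ ⊆ Γ \ C, Δ.Nonempty → ∃ F, IsLeafOf Δ F :=
    fun Δ hΔ => hl Δ (hΔ.trans Set.diff_subset)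
  by_cases hM : ∃ K ∈ Γ, K ∉ C ∧ ∃ K₀ ∈ C, (K ∩ K₀).Nonempty
  · -- some facet outside C meets C
    obtain ⟨Kw, hKwΓ, hKwC, K₀w, hK₀wC, _⟩ := hM
    have hCne : C.Nonempty := ⟨K₀w, hK₀wC⟩
    have hΓ'lt : (Γ \ C).ncard < Γ.ncard := by
      refine Set.ncard_lt_ncard ⟨Set.diff_subset, fun hsup => ?_⟩ hfin
      obtain ⟨K, hK⟩ := hCne
      exact (hsup (hCsub hK)).2 hK
    by_cases hC1 : ∃ K ∈ Γ, K ∉ C ∧ (∃ K₀ ∈ C, (K ∩ K₀).Nonempty) ∧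
        ∃ H ∈ Γ, (∀ K' ∈ C, H ∩ K' = ∅) ∧ H ∩ K = ∅
    · obtain ⟨K, hKΓ, hKC, hKmeets, Hw, hHwΓ, hHwav, hHwK⟩ := hC1
      have hmlt : Γ.ncard + (Γ \ insert K C).ncard < n := by
        have h1 : (Γ \ insert K C).ncard < (Γ \ C).ncard := by
          refine Set.ncard_lt_ncard ⟨fun X hX => ⟨hX.1, fun hXC => hX.2 (Set.mem_insert_iff.mpr (Or.inr hXC))⟩, fun hsup => ?_⟩ (Set.toFinite _)
          have := hsup ⟨hKΓ, hKC⟩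
          exact this.2 (Set.mem_insert _ _)
        omega
      obtain ⟨F, hFΓ, hFav, v, hvF, hstr⟩ := ih _ hmlt Γ (insert K C) le_rfl hne hl
        (Set.insert_subset_iff.mpr ⟨hKΓ, hCsub⟩) (famConn_insert K hKmeets hconn)
        ⟨Hw, hHwΓ, fun K' hK' => by
          rcases Set.mem_insert_iff.mp hK' with hKe | hKe
          · rw [hKe]; exact hHwK
          · exact hHwav K' hKe⟩
      exact ⟨F, hFΓ, fun K' hK' => hFav K' (Set.mem_insert_iff.mpr (Or.inr hK')), v, hvF, hstr⟩
    · push_neg at hC1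
      have hC2 : ∀ K ∈ Γ, K ∉ C → (∃ K₀ ∈ C, (K ∩ K₀).Nonempty) →
          ∀ H ∈ Γ, (∀ K' ∈ C, H ∩ K' = ∅) → (H ∩ K).Nonempty := by
        intro K hK h1 h2 H hH h3
        exact hC1 K hK h1 h2 H hH h3
      have hH₀Γ' : H₀ ∈ Γ \ C := ⟨hH₀Γ, hH₀C⟩
      by_cases hΛΛ : ∃ H₁ ∈ Γ, (∀ K ∈ C, H₁ ∩ K = ∅) ∧
          ∃ H₂ ∈ Γ, (∀ K ∈ C, H₂ ∩ K = ∅) ∧ H₁ ∩ H₂ = ∅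
      · obtain ⟨H₁, hH₁Γ, hH₁av, H₂, hH₂Γ, hH₂av, h12⟩ := hΛΛ
        have hH₁C : H₁ ∉ C := by
          intro hmem
          obtain ⟨x, hx⟩ := hne H₁ hH₁Γ
          exact no_common (hH₁av H₁ hmem) hx hx
        have hH₂C : H₂ ∉ C := by
          intro hmem
          obtain ⟨x, hx⟩ := hne H₂ hH₂Γ
          exact no_common (hH₂av H₂ hmem) hx hx
        have hmlt : (Γ \ C).ncard + ((Γ \ C) \ {H₁}).ncard < n := by
          have h1 : ((Γ \ C) \ {H₁}).ncard ≤ (Γ \ C).ncard :=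
            Set.ncard_le_ncard Set.diff_subset (Set.toFinite _)
          omega
        obtain ⟨F, hFΓ', hFavH₁, v, hvF, hstr'⟩ := ih _ hmlt (Γ \ C) {H₁} le_rfl hne' hl'
          (Set.singleton_subset_iff.mpr ⟨hH₁Γ, hH₁C⟩) (famConn_singleton H₁)
          ⟨H₂, ⟨hH₂Γ, hH₂C⟩, fun K hK => by
            rw [Set.mem_singleton_iff.mp hK, Finset.inter_comm]; exact h12⟩
        have hFH₁ : F ∩ H₁ = ∅ := hFavH₁ H₁ rfl
        have hFav : ∀ K ∈ C, F ∩ K = ∅ := by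
          intro K hK
          by_contra hne2
          have hFK : (F ∩ K).Nonempty := Finset.nonempty_iff_ne_empty.mpr hne2
          have := hC2 F hFΓ'.1 hFΓ'.2 ⟨K, hK, hFK⟩ H₁ hH₁Γ hH₁av
          obtain ⟨x, hx1, hx2⟩ := inter_wit this
          exact no_common hFH₁ hx2 hx1
        refine ⟨F, hFΓ'.1, hFav, v, hvF, fun H hH hFH => ?_⟩
        by_cases hHC : H ∈ C
        · obtain ⟨x, hx1, hx2⟩ := inter_wit hFH
          exact absurd (Finset.mem_inter.mpr ⟨hx1, hx2⟩) (by rw [hFav H hHC]; simp)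
        · exact hstr' H ⟨hH, hHC⟩ hFH
      · push_neg at hΛΛ
        by_cases hpair' : ∀ A ∈ Γ \ C, ∀ B ∈ Γ \ C, (A ∩ B).Nonempty
        · obtain ⟨v, hv⟩ := forest_helly (Γ \ C).ncard (Γ \ C) le_rfl hne' hl' hpair'
            ⟨H₀, hH₀Γ'⟩
          refine ⟨H₀, hH₀Γ, hH₀av, v, hv H₀ hH₀Γ', fun H hH hFH => ?_⟩
          by_cases hHC : H ∈ C
          · obtain ⟨x, hx1, hx2⟩ := inter_wit hFH
            exact (no_common (hH₀av H hHC) hx1 hx2).elim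
          · exact hv H ⟨hH, hHC⟩
        · push_neg at hpair'
          obtain ⟨K₁, hK₁Γ', K₂, hK₂Γ', hKKne⟩ := hpair'
          have hKK : K₁ ∩ K₂ = ∅ := hKKne
          exfalso
          have hK₁m : ∃ C₁ ∈ C, (K₁ ∩ C₁).Nonempty := by
            by_contra h
            push_neg at h
            have hK₁av : ∀ K ∈ C, K₁ ∩ K = ∅ :=
              fun K hK => h K hK
            by_cases h2 : ∃ C₂ ∈ C, (K₂ ∩ C₂).Nonempty
            · obtain ⟨x, hx1, hx2⟩ :=
                inter_wit (hC2 K₂ hK₂Γ'.1 hK₂Γ'.2 h2 K₁ hK₁Γ'.1 hK₁av)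
              exact no_common hKK hx1 hx2
            · push_neg at h2
              have hK₂av : ∀ K ∈ C, K₂ ∩ K = ∅ :=
                fun K hK => h2 K hK
              exact Finset.nonempty_iff_ne_empty.mp (hΛΛ K₁ hK₁Γ'.1 hK₁av K₂ hK₂Γ'.1 hK₂av) hKK
          have hK₂m : ∃ C₂ ∈ C, (K₂ ∩ C₂).Nonempty := by
            by_contra h
            push_neg at h
            have hK₂av : ∀ K ∈ C, K₂ ∩ K = ∅ :=
              fun K hK => h K hK
            obtain ⟨x, hx1, hx2⟩ :=
              inter_wit (hC2 K₁ hK₁Γ'.1 hK₁Γ'.2 hK₁m K₂ hK₂Γ'.1 hK₂av)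
            exact no_common hKK hx2 hx1
          obtain ⟨C₁, hC₁, hK₁C₁⟩ := hK₁m
          obtain ⟨C₂, hC₂, hK₂C₂⟩ := hK₂m
          obtain ⟨m, p, hp0, hpm, hpmem, hpcons⟩ := hconn C₁ hC₁ C₂ hC₂
          have hH₀K₁ : (H₀ ∩ K₁).Nonempty :=
            hC2 K₁ hK₁Γ'.1 hK₁Γ'.2 ⟨C₁, hC₁, hK₁C₁⟩ H₀ hH₀Γ hH₀av
          have hH₀K₂ : (H₀ ∩ K₂).Nonempty :=
            hC2 K₂ hK₂Γ'.1 hK₂Γ'.2 ⟨C₂, hC₂, hK₂C₂⟩ H₀ hH₀Γ hH₀av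
          exact forest_no_cycle m Γ p H₀ K₁ K₂ hl (fun i hi => hCsub (hpmem i hi)) hpcons
            hH₀Γ hK₁Γ'.1 hK₂Γ'.1 (fun i hi => hH₀av _ (hpmem i hi)) hH₀K₁ hH₀K₂ hKK
            (by rw [hp0]; exact hK₁C₁) (by rw [hpm]; exact hK₂C₂)
  · -- no facet outside C meets C
    push_neg at hM
    by_cases hCne : C.Nonempty
    · have hΓ'lt : (Γ \ C).ncard < Γ.ncard := by
        refine Set.ncard_lt_ncard ⟨Set.diff_subset, fun hsup => ?_⟩ hfin
        obtain ⟨K, hK⟩ := hCne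
        exact (hsup (hCsub hK)).2 hK
      have hmlt : (Γ \ C).ncard + ((Γ \ C) \ (∅ : Set (Finset V))).ncard < n := by
        rw [Set.diff_empty]
        omega
      obtain ⟨F, hFΓ', _, v, hvF, hstr⟩ := ih _ hmlt (Γ \ C) ∅ le_rfl hne' hl'
        (Set.empty_subset _) famConn_empty ⟨H₀, ⟨hH₀Γ, hH₀C⟩, fun K hK => by simp at hK⟩
      have hFav : ∀ K ∈ C, F ∩ K = ∅ := by
        intro K hK
        exact hM F hFΓ'.1 hFΓ'.2 K hK
      refine ⟨F, hFΓ'.1, hFav, v, hvF, fun H hH hFH => ?_⟩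
      by_cases hHC : H ∈ C
      · obtain ⟨x, hx1, hx2⟩ := inter_wit hFH
        exact absurd (no_common (hFav H hHC) hx1 hx2) not_false
      · exact hstr H ⟨hH, hHC⟩ hFH
    · have hC0 : C = ∅ := Set.not_nonempty_iff_eq_empty.mp hCne
      subst hC0
      by_cases hpair : ∀ A ∈ Γ, ∀ B ∈ Γ, (A ∩ B).Nonempty
      · obtain ⟨v, hv⟩ := forest_helly Γ.ncard Γ le_rfl hne hl hpair ⟨H₀, hH₀Γ⟩
        exact ⟨H₀, hH₀Γ, fun K hK => by simp at hK, v, hv H₀ hH₀Γ, fun H hH _ => hv H hH⟩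
      · push_neg at hpair
        obtain ⟨A, hA, B, hB, hABne⟩ := hpair
        have hAB : A ∩ B = ∅ := hABne
        have hmlt : Γ.ncard + (Γ \ ({A} : Set (Finset V))).ncard < n := by
          have h1 : (Γ \ ({A} : Set (Finset V))).ncard < Γ.ncard := by
            refine Set.ncard_lt_ncard ⟨Set.diff_subset, fun hsup => ?_⟩ hfin
            exact (hsup hA).2 rfl
          rw [Set.diff_empty] at hn
          omega
        obtain ⟨F, hFΓ, _, v, hvF, hstr⟩ := ih _ hmlt Γ {A} le_rfl hne hl
          (Set.singleton_subset_iff.mpr hA) (famConn_singleton A)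
          ⟨B, hB, fun K hK => by
            rw [Set.mem_singleton_iff.mp hK, Finset.inter_comm]; exact hAB⟩
        exact ⟨F, hFΓ, fun K hK => by simp at hK, v, hvF, hstr⟩

/-- Every nonempty forest has a "strong facet". -/
lemma exists_strong (Γ : Set (Finset V)) (hne : ∀ F ∈ Γ, F.Nonempty)
    (hl : ∀ Δ ⊆ Γ, Δ.Nonempty → ∃ F, IsLeafOf Δ F) (hΓne : Γ.Nonempty) :
    ∃ F ∈ Γ, ∃ v ∈ F, ∀ H ∈ Γ, (F ∩ H).Nonempty → v ∈ H := by
  obtain ⟨H₀, hH₀⟩ := hΓne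
  obtain ⟨F, hF, _, v, hvF, hstr⟩ := strong_avoid (Γ.ncard + (Γ \ ∅).ncard) Γ ∅ le_rfl
    hne hl (Set.empty_subset _) famConn_empty ⟨H₀, hH₀, fun K hK => by simp at hK⟩
  exact ⟨F, hF, v, hvF, hstr⟩

/-- König's property for forests. -/
lemma forest_konig : ∀ (n : ℕ) (Γ : Set (Finset V)), Γ.ncard ≤ n →
    (∀ F ∈ Γ, F.Nonempty) →
    (∀ Δ ⊆ Γ, Δ.Nonempty → ∃ F, IsLeafOf Δ F) →
    ∃ (E : Set (Finset V)) (W : Set V),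
      E ⊆ Γ ∧ E.Pairwise Disjoint ∧
      (∀ F ∈ Γ, ∃ v ∈ W, v ∈ F) ∧ E.ncard = W.ncard ∧
      (∀ E', E' ⊆ Γ → E'.Pairwise Disjoint → E'.ncard ≤ E.ncard) ∧
      (∀ W' : Set V, (∀ F ∈ Γ, ∃ v ∈ W', v ∈ F) → W.ncard ≤ W'.ncard) := by
  intro n
  induction n using Nat.strong_induction_on with
  | _ n ih =>
  intro Γ hn hne hl
  rcases Set.eq_empty_or_nonempty Γ with rfl | hΓne
  · refine ⟨∅, ∅, Set.empty_subset _, Set.pairwise_empty _, fun F hF => absurd hF (by simp),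
      by simp, fun E' hE' _ => ?_, fun W' _ => by simp⟩
    rw [Set.subset_empty_iff.mp hE']
  · obtain ⟨F, hFΓ, v, hvF, hstr⟩ := exists_strong Γ hne hl hΓne
    set Γ' : Set (Finset V) := {H | H ∈ Γ ∧ F ∩ H = ∅} with hΓ'def
    have hΓ'sub : Γ' ⊆ Γ := fun H hH => hH.1
    have hFΓ' : F ∉ Γ' := by
      intro hmem
      obtain ⟨x, hx⟩ := hne F hFΓ
      exact no_common hmem.2 hx hx
    have hΓ'lt : Γ'.ncard < Γ.ncard :=
      Set.ncard_lt_ncard ⟨hΓ'sub, fun hsup => hFΓ' (hsup hFΓ)⟩ (Set.toFinite Γ)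
    obtain ⟨E', W', hE'sub, hE'dis, hW'cov, hEW, hmax, hmin⟩ :=
      ih Γ'.ncard (by omega) Γ' le_rfl (fun H hH => hne H (hΓ'sub hH))
        (fun Δ hΔ => hl Δ (hΔ.trans hΓ'sub))
    have hFE' : F ∉ E' := fun h => hFΓ' (hE'sub h)
    have hvW' : v ∉ W' := by
      intro hvmem
      have hcov : ∀ H ∈ Γ', ∃ u ∈ W' \ {v}, u ∈ H := by
        intro H hH
        obtain ⟨u, huW', huH⟩ := hW'cov H hH
        refine ⟨u, ⟨huW', fun hu => ?_⟩, huH⟩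
        rw [Set.mem_singleton_iff.mp hu] at huH
        exact no_common hH.2 hvF huH
      have h1 := hmin (W' \ {v}) hcov
      have h2 : (W' \ {v}).ncard < W'.ncard :=
        Set.ncard_lt_ncard ⟨Set.diff_subset, fun hsup => (hsup hvmem).2 rfl⟩ (Set.toFinite _)
      omega
    refine ⟨insert F E', insert v W', ?_, ?_, ?_, ?_, ?_, ?_⟩
    · exact Set.insert_subset_iff.mpr ⟨hFΓ, hE'sub.trans hΓ'sub⟩
    · intro A hA B hB hAB
      rcases Set.mem_insert_iff.mp hA with rfl | hA' <;>
        rcases Set.mem_insert_iff.mp hB with rfl | hB'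
      · exact absurd rfl hAB
      · exact Finset.disjoint_iff_inter_eq_empty.mpr ((hE'sub hB').2)
      · rw [disjoint_comm]
        exact Finset.disjoint_iff_inter_eq_empty.mpr ((hE'sub hA').2)
      · exact hE'dis hA' hB' hAB
    · intro H hH
      by_cases hFH : F ∩ H = ∅
      · obtain ⟨u, huW', huH⟩ := hW'cov H ⟨hH, hFH⟩
        exact ⟨u, Set.mem_insert_iff.mpr (Or.inr huW'), huH⟩
      · exact ⟨v, Set.mem_insert _ _, hstr H hH (Finset.nonempty_iff_ne_empty.mpr hFH)⟩
    · rw [Set.ncard_insert_of_notMem hFE' (Set.toFinite _),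
        Set.ncard_insert_of_notMem hvW' (Set.toFinite _), hEW]
    · intro E'' hE''sub hE''dis
      set S : Set (Finset V) := {H | H ∈ E'' ∧ (F ∩ H).Nonempty} with hSdef
      have hSsub : S ⊆ E'' := fun H hH => hH.1
      have hS1 : S.ncard ≤ 1 := by
        rw [Set.ncard_le_one (Set.toFinite S)]
        intro A hA B hB
        by_contra hABne
        have hdis := hE''dis (hSsub hA) (hSsub hB) hABne
        have hvA : v ∈ A := hstr A (hE''sub (hSsub hA)) hA.2
        have hvB : v ∈ B := hstr B (hE''sub (hSsub hB)) hB.2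
        exact Finset.disjoint_left.mp hdis hvA hvB
      have hdiffsub : E'' \ S ⊆ Γ' := by
        intro H hH
        refine ⟨hE''sub hH.1, ?_⟩
        by_contra hne2
        exact hH.2 ⟨hH.1, Finset.nonempty_iff_ne_empty.mpr hne2⟩
      have h1 : (E'' \ S).ncard ≤ E'.ncard :=
        hmax (E'' \ S) hdiffsub (fun A hA B hB hAB => hE''dis hA.1 hB.1 hAB)
      have h2 : E''.ncard ≤ (E'' \ S).ncard + S.ncard := by
        have := Set.ncard_union_le (E'' \ S) S
        have hsub2 : E'' ⊆ (E'' \ S) ∪ S := by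
          intro H hH
          by_cases h : H ∈ S
          · exact Set.mem_union_right _ h
          · exact Set.mem_union_left _ ⟨hH, h⟩
        have := Set.ncard_le_ncard hsub2 (Set.toFinite _)
        omega
      have h3 : (insert F E').ncard = E'.ncard + 1 :=
        Set.ncard_insert_of_notMem hFE' (Set.toFinite _)
      omega
    · intro W'' hW''cov
      obtain ⟨u, huW'', huF⟩ := hW''cov F hFΓ
      have hcov' : ∀ H ∈ Γ', ∃ w ∈ W'' \ {u}, w ∈ H := by
        intro H hH
        obtain ⟨w, hwW'', hwH⟩ := hW''cov H (hΓ'sub hH)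
        refine ⟨w, ⟨hwW'', fun hw => ?_⟩, hwH⟩
        rw [Set.mem_singleton_iff.mp hw] at hwH
        exact no_common hH.2 huF hwH
      have h1 := hmin (W'' \ {u}) hcov'
      have h2 : (W'' \ {u}).ncard + 1 = W''.ncard :=
        Set.ncard_diff_singleton_add_one huW'' (Set.toFinite _)
      have h3 : (insert v W').ncard = W'.ncard + 1 :=
        Set.ncard_insert_of_notMem hvW' (Set.toFinite _)
      omega

end Aux

/-- The edge ideal (facet clutter) of a simplicial tree satisfies the König
property: the maximum number of pairwise disjoint facets equals the minimum
size of a vertex cover of the facets. -/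
theorem simplicialTree_konig {V : Type*} [Fintype V] [DecidableEq V]
    (Facets : Set (Finset V)) (hΔ : IsSimplicialTree Facets) :
    ∃ (E : Set (Finset V)) (W : Set V),
      E ⊆ Facets ∧ E.Pairwise Disjoint ∧
      (∀ F ∈ Facets, ∃ v ∈ W, v ∈ F) ∧ E.ncard = W.ncard ∧
      (∀ E', E' ⊆ Facets → E'.Pairwise Disjoint → E'.ncard ≤ E.ncard) ∧
      (∀ W' : Set V, (∀ F ∈ Facets, ∃ v ∈ W', v ∈ F) → W.ncard ≤ W'.ncard) := by
  exact forest_konig Facets.ncard Facets le_rfl hΔ.1 hΔ.2.2.2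
end
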